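/- arXiv:1007.3197 — 10 statements merged into one kernel-verified Lean document; each statement's English description precedes it below -/
import Mathlib

section
/- Let X be a real Banach space, Ω ⊊ X a domain, x₀ ∈ Ω and 0 < r ≤ log 2. Then the closed j-metric ball B_j(x₀, r) = {y ∈ Ω : j_Ω(x₀, y) ≤ r} is starlike with respect to x₀; that is, for every y ∈ Ω with j_Ω(x₀, y) ≤ r and every t ∈ [0,1], the point t·y + (1−t)·x₀ lies in Ω and satisfies j_Ω(x₀, t·y + (1−t)·x₀) ≤ r. -/
/-- The distance-ratio metric (j-metric) on a domain `Ω` of a Banach space: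
`j_Ω(x,y) = log(1 + ‖x − y‖ / min(d(x), d(y)))` where `d(x) = dist(x, X ∖ Ω)`. -/
noncomputable def jDist {X : Type*} [NormedAddCommGroup X]
    (Ω : Set X) (x y : X) : ℝ :=
  Real.log (1 + ‖x - y‖ / min (Metric.infDist x Ωᶜ) (Metric.infDist y Ωᶜ))

/-- Each closed `j`-ball of radius `r ≤ log 2` is starlike with respect to its center. -/
theorem jBall_starlike_of_radius_le_log_two
    {X : Type*} [NormedAddCommGroup X] [NormedSpace ℝ X] [CompleteSpace X]
    (Ω : Set X) (hΩopen : IsOpen Ω) (hΩconn : IsConnected Ω) (hΩproper : Ω ≠ Set.univ)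
    (x₀ : X) (hx₀ : x₀ ∈ Ω) (r : ℝ) (hr : 0 < r) (hr' : r ≤ Real.log 2)
    (y : X) (hy : y ∈ Ω) (hjy : jDist Ω x₀ y ≤ r)
    (t : ℝ) (ht : t ∈ Set.Icc (0 : ℝ) 1) :
    t • y + (1 - t) • x₀ ∈ Ω ∧ jDist Ω x₀ (t • y + (1 - t) • x₀) ≤ r := by
  obtain ⟨ht0, ht1⟩ := ht
  have hne : Ωᶜ.Nonempty := Set.nonempty_compl.2 hΩproper
  have hclosed : IsClosed Ωᶜ := hΩopen.isClosed_compl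
  set z : X := t • y + (1 - t) • x₀ with hzdef
  set dx := Metric.infDist x₀ Ωᶜ with hdxdef
  set dy := Metric.infDist y Ωᶜ with hdydef
  set u := ‖x₀ - y‖ with hudef
  have hu0 : 0 ≤ u := norm_nonneg _
  have hdx : 0 < dx := (hclosed.notMem_iff_infDist_pos hne).1 (by simpa using hx₀)
  have hdy : 0 < dy := (hclosed.notMem_iff_infDist_pos hne).1 (by simpa using hy)
  have hm : 0 < min dx dy := lt_min hdx hdy
  -- norm computations
  have hxz : x₀ - z = t • (x₀ - y) := by rw [hzdef]; module
  have hnxz : ‖x₀ - z‖ = t * u := by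
    rw [hxz, norm_smul, Real.norm_of_nonneg ht0]
  have hyzv : y - z = (1 - t) • (y - x₀) := by rw [hzdef]; module
  have hnyz : ‖y - z‖ = (1 - t) * u := by
    rw [hyzv, norm_smul, Real.norm_of_nonneg (by linarith), hudef, norm_sub_rev]
  -- extract `u ≤ s * min dx dy` from `hjy`
  set s := Real.exp r - 1 with hsdef
  have hs0 : 0 < s := by
    have := Real.add_one_le_exp r
    linarith
  have hs1 : s ≤ 1 := by
    have h2 : Real.exp r ≤ Real.exp (Real.log 2) := Real.exp_le_exp.2 hr'
    rw [Real.exp_log (by norm_num : (0:ℝ) < 2)] at h2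
    linarith
  have hjy' : 1 + u / min dx dy ≤ Real.exp r := by
    have hpos : 0 < 1 + u / min dx dy := by positivity
    exact (Real.log_le_iff_le_exp hpos).1 hjy
  have hus : u ≤ s * min dx dy := by
    have : u / min dx dy ≤ s := by linarith
    calc u = u / min dx dy * min dx dy := by field_simp
    _ ≤ s * min dx dy := by
        exact mul_le_mul_of_nonneg_right this hm.le
  have husx : u ≤ s * dx := hus.trans (mul_le_mul_of_nonneg_left (min_le_left _ _) hs0.le)
  have husy : u ≤ s * dy := hus.trans (mul_le_mul_of_nonneg_left (min_le_right _ _) hs0.le)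
  have hudx : u ≤ dx := by nlinarith
  -- membership
  have hzΩ : z ∈ Ω := by
    rcases eq_or_lt_of_le ht1 with h1 | h1
    · have : z = y := by rw [hzdef, h1]; simp
      rw [this]; exact hy
    · by_contra hzc
      have hle : dx ≤ dist x₀ z := Metric.infDist_le_dist_of_mem (by simpa using hzc)
      rw [dist_eq_norm, hnxz] at hle
      nlinarith
  refine ⟨hzΩ, ?_⟩
  set dz := Metric.infDist z Ωᶜ with hdzdef
  have hdz : 0 < dz := (hclosed.notMem_iff_infDist_pos hne).1 (by simpa using hzΩ)
  have hL2 : dy ≤ dz + (1 - t) * u := by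
    have := Metric.infDist_le_infDist_add_dist (x := y) (y := z) (s := Ωᶜ)
    rwa [dist_eq_norm, hnyz] at this
  -- key inequalities
  have k1 : t * u ≤ s * dx := by nlinarith
  have k2 : t * u ≤ s * dz := by
    nlinarith [mul_nonneg (mul_nonneg (sub_nonneg.2 ht1) (sub_nonneg.2 hs1)) hu0,
      mul_le_mul_of_nonneg_left (show dy - (1 - t) * u ≤ dz from by linarith) hs0.le]
  have hmin : 0 < min dx dz := lt_min hdx hdz
  have k : t * u ≤ s * min dx dz := by
    rcases le_total dx dz with h | h
    · rw [min_eq_left h]; exact k1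
    · rw [min_eq_right h]; exact k2
  show Real.log (1 + ‖x₀ - z‖ / min dx dz) ≤ r
  rw [hnxz]
  have hdivnn : 0 ≤ t * u / min dx dz := div_nonneg (mul_nonneg ht0 hu0) hmin.le
  rw [Real.log_le_iff_le_exp (by linarith)]
  have : t * u / min dx dz ≤ s := (div_le_iff₀ hmin).2 k
  linarith
end

section
/- Let X be a reflexive real Banach space (the canonical inclusion of X into its double dual is surjective) and let Ω ⊊ X be a domain that is open in the weak topology of X. Then for every x ∈ Ω and r > 0, the open j-ball of Ω equals the intersection of the open j-balls of the punctured spaces: U_{j_Ω}(x, r) = ⋂_{z ∈ X ∖ Ω} U_{j_{X ∖ {z}}}(x, r), where U_{j_{X∖{z}}}(x,r) = {y ≠ z : log(1 + ‖x − y‖ / min(‖x − z‖, ‖y − z‖)) < r}. -/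
open Metric NormedSpace Set

namespace NormedSpace

section RCLike

variable {𝕜 X : Type*} [RCLike 𝕜] [NormedAddCommGroup X] [NormedSpace 𝕜 X]

theorem surjective_inclusionInDoubleDualWeak
    (hrefl : Function.Surjective (inclusionInDoubleDual 𝕜 X)) :
    Function.Surjective (inclusionInDoubleDualWeak 𝕜 X) := by
  intro F
  obtain ⟨x, hx⟩ := hrefl (StrongDual.toWeakDual.symm F)
  exact ⟨toWeakSpace 𝕜 X x, StrongDual.toWeakDual.symm.injective hx⟩

theorem isCompact_toWeakSpace_image_of_isBounded
    (hrefl : Function.Surjective (inclusionInDoubleDual 𝕜 X)) {C : Set X}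
    (hC : IsClosed (toWeakSpace 𝕜 X '' C)) (hb : Bornology.IsBounded C) :
    IsCompact (toWeakSpace 𝕜 X '' C) := by
  rw [← hC.closure_eq]
  refine isCompact_closure_of_isBounded 𝕜 X _ ?_ ?_
  · rwa [(toWeakSpace 𝕜 X).injective.preimage_image]
  · rw [(surjective_inclusionInDoubleDualWeak hrefl).range_eq]
    exact subset_univ _

end RCLike

variable {X : Type*} [NormedAddCommGroup X] [NormedSpace ℝ X]

theorem isClosed_toWeakSpace_closedBall (w : X) (R : ℝ) :
    IsClosed (toWeakSpace ℝ X '' closedBall w R) := by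
  rw [← closure_eq_iff_isClosed, ← (convex_closedBall w R).toWeakSpace_closure (𝕜 := ℝ),
    isClosed_closedBall.closure_eq]

theorem lowerSemicontinuous_dist_toWeakSpace_symm (w : X) :
    LowerSemicontinuous fun v : WeakSpace ℝ X ↦ dist w ((toWeakSpace ℝ X).symm v) := by
  refine lowerSemicontinuous_iff_isClosed_preimage.2 fun R ↦ ?_
  convert isClosed_toWeakSpace_closedBall w R using 1
  ext v
  simp [LinearEquiv.image_eq_preimage_symm, dist_comm]

theorem exists_dist_eq_infDist_of_isClosed_toWeakSpace_image
    (hrefl : Function.Surjective (inclusionInDoubleDual ℝ X)) {C : Set X}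
    (hC : IsClosed (toWeakSpace ℝ X '' C)) (hne : C.Nonempty) (w : X) :
    ∃ z ∈ C, dist w z = infDist w C := by
  set K := C ∩ closedBall w (infDist w C + 1)
  have hK : IsCompact (toWeakSpace ℝ X '' K) := by
    refine isCompact_toWeakSpace_image_of_isBounded hrefl ?_
      (isBounded_closedBall.subset inter_subset_right)
    rw [image_inter (toWeakSpace ℝ X).injective]
    exact hC.inter (isClosed_toWeakSpace_closedBall w _)
  have hKne : K.Nonempty := by
    obtain ⟨z, hz, hwz⟩ := (infDist_lt_iff hne).1 (lt_add_one (infDist w C))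
    exact ⟨z, hz, mem_closedBall'.2 hwz.le⟩
  obtain ⟨_, ⟨z, ⟨hzC, hzK⟩, rfl⟩, hmin⟩ := (lowerSemicontinuous_dist_toWeakSpace_symm w
    |>.lowerSemicontinuousOn _).exists_isMinOn (hKne.image _) hK
  refine ⟨z, hzC, le_antisymm (le_of_not_gt fun hlt ↦ ?_) (infDist_le_dist_of_mem hzC)⟩
  obtain ⟨v, hvC, hwv⟩ := (infDist_lt_iff hne).1 hlt
  have hvK : v ∈ K := ⟨hvC, mem_closedBall'.2 (hwv.le.trans (mem_closedBall'.1 hzK))⟩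
  have hzv : dist w z ≤ dist w v := by simpa using hmin (mem_image_of_mem _ hvK)
  exact hzv.not_gt hwv

end NormedSpace

theorem Metric.exists_min_dist_eq_min_infDist {α : Type*} [PseudoMetricSpace α] {C : Set α}
    {x y : α} (hx : ∃ z ∈ C, dist x z = infDist x C) (hy : ∃ z ∈ C, dist y z = infDist y C) :
    ∃ z ∈ C, min (dist x z) (dist y z) = min (infDist x C) (infDist y C) := by
  obtain ⟨zx, hzx, hx⟩ := hx
  obtain ⟨zy, hzy, hy⟩ := hy
  rcases le_total (infDist x C) (infDist y C) with hle | hle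
  · refine ⟨zx, hzx, ?_⟩
    rw [hx, min_eq_left hle, min_eq_left (hle.trans (infDist_le_dist_of_mem hzx))]
  · refine ⟨zy, hzy, ?_⟩
    rw [hy, min_eq_right hle, min_eq_right (hle.trans (infDist_le_dist_of_mem hzy))]

section jDist

variable {X : Type*} [NormedAddCommGroup X]

theorem jDist_compl_singleton (z x y : X) :
    jDist {z}ᶜ x y = Real.log (1 + ‖x - y‖ / min (dist x z) (dist y z)) := by
  simp [jDist, infDist_singleton]

theorem jDist_compl_singleton_le_jDist {Ω : Set X} {x y z : X}
    (hpos : 0 < min (infDist x Ωᶜ) (infDist y Ωᶜ)) (hz : z ∈ Ωᶜ) :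
    jDist {z}ᶜ x y ≤ jDist Ω x y := by
  rw [jDist_compl_singleton, jDist]
  gcongr <;> exact infDist_le_dist_of_mem hz

end jDist

theorem jOpenBall_eq_iInter_punctured_jOpenBalls_general
    {X : Type*} [NormedAddCommGroup X] [NormedSpace ℝ X]
    (hrefl : Function.Surjective (NormedSpace.inclusionInDoubleDual ℝ X))
    (Ω : Set X) (hΩweakOpen : IsOpen ((toWeakSpace ℝ X) '' Ω))
    (hΩproper : Ω ≠ Set.univ)
    (x : X) (hx : x ∈ Ω) (r : ℝ) :
    {y ∈ Ω | jDist Ω x y < r} =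
      ⋂ z ∈ Ωᶜ, {y ∈ ({z}ᶜ : Set X) | jDist ({z}ᶜ : Set X) x y < r} := by
  have hΩc : IsClosed (toWeakSpace ℝ X '' Ωᶜ) := by
    rw [image_compl_eq (toWeakSpace ℝ X).bijective]
    exact hΩweakOpen.isClosed_compl
  have hne : Ωᶜ.Nonempty := nonempty_compl.2 hΩproper
  have hd : ∀ w ∈ Ω, 0 < infDist w Ωᶜ := fun w hw ↦
    ((WeakSpace.isOpen_of_isOpen Ω hΩweakOpen).isClosed_compl.notMem_iff_infDist_pos hne).1
      (not_not_intro hw)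
  ext y
  simp only [mem_ofPred_eq, mem_iInter, mem_compl_iff, mem_singleton_iff]
  constructor
  · rintro ⟨hy, hjy⟩ z hz
    exact ⟨ne_of_mem_of_not_mem hy hz,
      (jDist_compl_singleton_le_jDist (lt_min (hd x hx) (hd y hy)) hz).trans_lt hjy⟩
  · intro h
    have hy : y ∈ Ω := by_contra fun hy ↦ (h y hy).1 rfl
    obtain ⟨z, hz, hmin⟩ := exists_min_dist_eq_min_infDist
      (exists_dist_eq_infDist_of_isClosed_toWeakSpace_image hrefl hΩc hne x)
      (exists_dist_eq_infDist_of_isClosed_toWeakSpace_image hrefl hΩc hne y)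
    have hjz := (h z hz).2
    rw [jDist_compl_singleton, hmin] at hjz
    exact ⟨hy, hjz⟩

/-- For a reflexive Banach space `X` and a weakly open domain `Ω`, the open `j`-ball of `Ω`
is the intersection of the open `j`-balls of the punctured spaces `X ∖ {z}`, `z ∈ X ∖ Ω`. -/
theorem jOpenBall_eq_iInter_punctured_jOpenBalls
    {X : Type*} [NormedAddCommGroup X] [NormedSpace ℝ X] [CompleteSpace X]
    (hrefl : Function.Surjective (NormedSpace.inclusionInDoubleDual ℝ X))
    (Ω : Set X) (hΩweakOpen : IsOpen ((toWeakSpace ℝ X) '' Ω))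
    (hΩconn : IsConnected Ω) (hΩproper : Ω ≠ Set.univ)
    (x : X) (hx : x ∈ Ω) (r : ℝ) (hr : 0 < r) :
    {y ∈ Ω | jDist Ω x y < r} =
      ⋂ z ∈ Ωᶜ, {y ∈ ({z}ᶜ : Set X) | jDist ({z}ᶜ : Set X) x y < r} :=
  jOpenBall_eq_iInter_punctured_jOpenBalls_general hrefl Ω hΩweakOpen hΩproper x hx r
end

section
/- Let X be a real Banach space and Ω ⊊ X a convex domain. Then every closed j-ball B_j(x, r) = {y ∈ Ω : j_Ω(x, y) ≤ r}, for x ∈ Ω and r > 0, is a convex set. -/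
/-!
On a convex domain the boundary distance `d` is concave: if `z` is within `θ d(a) + μ d(b)`
of `θ a + μ b`, the same displacement splits as `z = θ a' + μ b'` with `a'` within `d(a)` of `a`
and `b'` within `d(b)` of `b`. For `c = e^r - 1 ≥ 0` the ball `B_j(x, r)` is
`{y ∈ Ω | ‖x - y‖ ≤ c · min (d x) (d y)}`, a superlevel set of the concave function
`y ↦ c · min (d x) (d y) - ‖x - y‖`, hence convex.
-/

open Metric

section ConcaveInfDist

variable {E : Type*} [NormedAddCommGroup E] [NormedSpace ℝ E] {s : Set E}

lemma add_infDist_compl_smul_mem {p u : E} (hp : p ∈ s) (hu : ‖u‖ < 1) :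
    p + infDist p sᶜ • u ∈ s := by
  rcases (infDist_nonneg (x := p) (s := sᶜ)).eq_or_lt with hd | hd
  · simpa [← hd] using hp
  · apply ball_infDist_compl_subset
    rw [mem_ball, dist_eq_norm, add_sub_cancel_left, norm_smul, Real.norm_of_nonneg hd.le]
    exact mul_lt_of_lt_one_right hd hu

theorem Convex.concaveOn_infDist_compl (hs : Convex ℝ s) :
    ConcaveOn ℝ s fun x => infDist x sᶜ := by
  refine ⟨hs, fun a ha b hb θ μ hθ hμ hsum => ?_⟩
  rcases sᶜ.eq_empty_or_nonempty with hempty | hne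
  · simp [hempty]
  rw [smul_eq_mul, smul_eq_mul, le_infDist hne]
  intro z hz
  by_contra! hlt
  set t := θ * infDist a sᶜ + μ * infDist b sᶜ
  have ht : 0 < t := dist_nonneg.trans_lt hlt
  set u := t⁻¹ • (z - (θ • a + μ • b))
  have hu : ‖u‖ < 1 := by
    rw [norm_smul, norm_inv, Real.norm_of_nonneg ht.le, ← dist_eq_norm, dist_comm]
    exact (inv_mul_lt_one₀ ht).mpr hlt
  have hsplit : θ • (a + infDist a sᶜ • u) + μ • (b + infDist b sᶜ • u) = z := by
    calc θ • (a + infDist a sᶜ • u) + μ • (b + infDist b sᶜ • u)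
        = (θ • a + μ • b) + t • u := by simp only [t]; module
      _ = z := by rw [smul_inv_smul₀ ht.ne', add_sub_cancel]
  exact hz (hsplit ▸ hs (add_infDist_compl_smul_mem ha hu) (add_infDist_compl_smul_mem hb hu)
    hθ hμ hsum)

end ConcaveInfDist

lemma jDist_le_iff {X : Type*} [NormedAddCommGroup X] {Ω : Set X} {x y : X}
    (h : 0 < min (infDist x Ωᶜ) (infDist y Ωᶜ)) (r : ℝ) :
    jDist Ω x y ≤ r ↔ ‖x - y‖ ≤ (Real.exp r - 1) * min (infDist x Ωᶜ) (infDist y Ωᶜ) := by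
  rw [jDist, Real.log_le_iff_le_exp (by positivity), ← le_sub_iff_add_le', div_le_iff₀ h]

theorem jBall_convex_of_convex_domain_general
    {X : Type*} [NormedAddCommGroup X] [NormedSpace ℝ X]
    (Ω : Set X) (hΩopen : IsOpen Ω) (hΩconv : Convex ℝ Ω)
    (hΩproper : Ω ≠ Set.univ)
    (x : X) (hx : x ∈ Ω) (r : ℝ) (hr : 0 < r) :
    Convex ℝ {y ∈ Ω | jDist Ω x y ≤ r} := by
  have hd : ∀ y ∈ Ω, 0 < infDist y Ωᶜ := fun y hy =>
    (hΩopen.isClosed_compl.notMem_iff_infDist_pos (Set.nonempty_compl.mpr hΩproper)).mp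
      (not_not.mpr hy)
  have hc : 0 ≤ Real.exp r - 1 := by linarith [Real.add_one_le_exp r]
  have hconc : ConcaveOn ℝ Ω fun y =>
      (Real.exp r - 1) * min (infDist x Ωᶜ) (infDist y Ωᶜ) - dist y x :=
    (((concaveOn_const _ hΩconv).inf hΩconv.concaveOn_infDist_compl).smul hc).sub
      (convexOn_dist x hΩconv)
  convert hconc.convex_ge 0 using 1
  refine Set.sep_ext_iff.mpr fun y hy => ?_
  rw [jDist_le_iff (lt_min (hd x hx) (hd y hy)), sub_nonneg, dist_eq_norm, norm_sub_rev]

/-- On a convex domain of a Banach space, every closed `j`-ball is convex. -/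
theorem jBall_convex_of_convex_domain
    {X : Type*} [NormedAddCommGroup X] [NormedSpace ℝ X] [CompleteSpace X]
    (Ω : Set X) (hΩopen : IsOpen Ω) (hΩconn : IsConnected Ω) (hΩconv : Convex ℝ Ω)
    (hΩproper : Ω ≠ Set.univ)
    (x : X) (hx : x ∈ Ω) (r : ℝ) (hr : 0 < r) :
    Convex ℝ {y ∈ Ω | jDist Ω x y ≤ r} :=
  jBall_convex_of_convex_domain_general Ω hΩopen hΩconv hΩproper x hx r hr
end

section
/- Let X be a real Banach space and Ω ⊊ X a convex domain. Then every closed quasihyperbolic ball B_k(x, r) = {y ∈ Ω : k_Ω(x, y) ≤ r}, for x ∈ Ω and r > 0, is a convex set. -/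
/-- The quasihyperbolic length of a path `γ` on `[a,b]` in a domain `Ω`:
`ℓ_k(γ) = ∫ₐᵇ ‖γ′(t)‖ / d(γ(t)) dt`, where `d(x) = dist(x, X ∖ Ω)`. -/
noncomputable def qhLength {X : Type*} [NormedAddCommGroup X] [NormedSpace ℝ X]
    (Ω : Set X) (γ : ℝ → X) (a b : ℝ) : ℝ :=
  ∫ t in a..b, ‖deriv γ t‖ / Metric.infDist (γ t) Ωᶜ

/-- The quasihyperbolic distance on a domain `Ω`: the infimum of quasihyperbolic lengths
over continuously differentiable paths in `Ω` joining the two points. -/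
noncomputable def qhDist {X : Type*} [NormedAddCommGroup X] [NormedSpace ℝ X]
    (Ω : Set X) (x y : X) : ℝ :=
  sInf ((fun γ : ℝ → X => qhLength Ω γ 0 1) ''
    {γ | ContDiff ℝ 1 γ ∧ Set.MapsTo γ (Set.Icc 0 1) Ω ∧ γ 0 = x ∧ γ 1 = y})

/-!
On a convex domain the distance to the boundary `d = infDist · Ωᶜ` is concave, since
`a • B(u, d u) + b • B(v, d v) = B(a u + b v, a d u + b d v) ⊆ Ω`. Hence if two paths from `x`
satisfy `‖γᵢ'‖ ≤ R · d(γᵢ)` pointwise, so does `a • γ₁ + b • γ₂`, a path from `x` to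
`a y₁ + b y₂` of quasihyperbolic length at most `R`. Such paths to `yᵢ` exist whenever
`k(x, yᵢ) < R`: a path of quasihyperbolic length `L < R` reparametrized by the inverse of
`t ↦ ∫₀ᵗ (‖γ'‖ / d(γ) + ε)` has quasihyperbolic speed at most `L + ε` everywhere.
-/

open Metric Set
open scoped Pointwise

lemma IsOpen.infDist_compl_pos {Y : Type*} [PseudoMetricSpace Y] {Ω : Set Y} (hΩ : IsOpen Ω)
    (hne : Ωᶜ.Nonempty) {u : Y} (hu : u ∈ Ω) : 0 < infDist u Ωᶜ :=
  (hΩ.isClosed_compl.notMem_iff_infDist_pos hne).1 (by simpa using hu)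

section DistanceToBoundary

variable {X : Type*} [NormedAddCommGroup X] [NormedSpace ℝ X] {Ω : Set X}

theorem Convex.concaveOn_infDist_compl_s6 (hconv : Convex ℝ Ω) (hΩ : IsOpen Ω)
    (hne : Ωᶜ.Nonempty) : ConcaveOn ℝ Ω (infDist · Ωᶜ) := by
  refine concaveOn_iff_forall_pos.2 ⟨hconv, fun u hu v hv a b ha hb hab => ?_⟩
  have hball : ball (a • u + b • v) (a * infDist u Ωᶜ + b * infDist v Ωᶜ) ⊆ Ω :=
    calc ball (a • u + b • v) (a * infDist u Ωᶜ + b * infDist v Ωᶜ)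
        = a • ball u (infDist u Ωᶜ) + b • ball v (infDist v Ωᶜ) := by
          rw [_root_.smul_ball ha.ne', _root_.smul_ball hb.ne', Real.norm_of_nonneg ha.le,
            Real.norm_of_nonneg hb.le, ball_add_ball]
          · exact mul_pos ha (hΩ.infDist_compl_pos hne hu)
          · exact mul_pos hb (hΩ.infDist_compl_pos hne hv)
      _ ⊆ a • Ω + b • Ω := add_subset_add (smul_set_mono ball_infDist_compl_subset)
          (smul_set_mono ball_infDist_compl_subset)
      _ ⊆ Ω := hconv.set_combo_subset ha.le hb.le hab
  exact (le_infDist hne).2 fun w hw => not_lt.1 fun h => hw (hball (mem_ball'.2 h))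

lemma norm_combo_le_mul_infDist_compl (hconv : Convex ℝ Ω) (hΩ : IsOpen Ω) (hne : Ωᶜ.Nonempty)
    {u v p q : X} (hu : u ∈ Ω) (hv : v ∈ Ω) {R a b : ℝ} (ha : 0 ≤ a) (hb : 0 ≤ b)
    (hab : a + b = 1) (hp : ‖p‖ ≤ R * infDist u Ωᶜ) (hq : ‖q‖ ≤ R * infDist v Ωᶜ) :
    ‖a • p + b • q‖ ≤ R * infDist (a • u + b • v) Ωᶜ := by
  have hR : 0 ≤ R :=
    nonneg_of_mul_nonneg_left ((norm_nonneg p).trans hp) (hΩ.infDist_compl_pos hne hu)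
  calc ‖a • p + b • q‖ ≤ a * ‖p‖ + b * ‖q‖ := by
        refine (norm_add_le _ _).trans_eq ?_
        rw [norm_smul, norm_smul, Real.norm_of_nonneg ha, Real.norm_of_nonneg hb]
    _ ≤ a * (R * infDist u Ωᶜ) + b * (R * infDist v Ωᶜ) := by gcongr
    _ = R * (a * infDist u Ωᶜ + b * infDist v Ωᶜ) := by ring
    _ ≤ R * infDist (a • u + b • v) Ωᶜ :=
        mul_le_mul_of_nonneg_left ((hconv.concaveOn_infDist_compl_s6 hΩ hne).2 hu hv ha hb hab) hR

end DistanceToBoundary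

section Reparametrization

open intervalIntegral

lemma exists_orderIso_eq_integral {g : ℝ → ℝ} (hg : Continuous g) {ε : ℝ} (hε : 0 < ε)
    (hgε : ∀ t, ε ≤ g t) : ∃ e : ℝ ≃o ℝ, ∀ t, e t = ∫ u in (0 : ℝ)..t, g u := by
  set H : ℝ → ℝ := fun t => ∫ u in (0 : ℝ)..t, g u
  have hH : ∀ t, HasDerivAt H (g t) t := fun t => hg.integral_hasStrictDerivAt 0 t |>.hasDerivAt
  have hmono : StrictMono H := strictMono_of_deriv_pos fun t => (hH t).deriv ▸ hε.trans_le (hgε t)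
  have hlin : Monotone fun t => H t - ε * t := by
    have hd : ∀ t, HasDerivAt (fun t => H t - ε * t) (g t - ε * 1) t :=
      fun t => (hH t).sub ((hasDerivAt_id' t).const_mul ε)
    exact monotone_of_deriv_nonneg (fun t => (hd t).differentiableAt)
      fun t => (hd t).deriv ▸ by linarith [hgε t]
  have hH0 : H 0 = 0 := integral_same
  have htop : Filter.Tendsto H Filter.atTop Filter.atTop :=
    Filter.tendsto_atTop_mono' _ (Filter.eventually_ge_atTop 0 |>.mono fun t ht => by
      simpa [hH0] using hlin ht) (Filter.tendsto_id.const_mul_atTop hε)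
  have hbot : Filter.Tendsto H Filter.atBot Filter.atBot :=
    Filter.tendsto_atBot_mono' _ (Filter.eventually_le_atBot 0 |>.mono fun t ht => by
      simpa [hH0] using hlin ht) (Filter.tendsto_id.const_mul_atBot hε)
  exact ⟨StrictMono.orderIsoOfSurjective H hmono
    ((continuous_iff_continuousAt.2 fun t => (hH t).continuousAt).surjective htop hbot),
    fun _ => rfl⟩

/-- `φ s = H⁻¹ (H 1 * s)` where `H t = ∫₀ᵗ g`. -/
lemma exists_reparam_hasDerivAt_integral_div {g : ℝ → ℝ} (hg : Continuous g) {ε : ℝ}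
    (hε : 0 < ε) (hgε : ∀ t, ε ≤ g t) :
    ∃ φ : ℝ → ℝ, ContDiff ℝ 1 φ ∧ φ 0 = 0 ∧ φ 1 = 1 ∧ MapsTo φ (Icc 0 1) (Icc 0 1) ∧
      ∀ s, HasDerivAt φ ((∫ u in (0 : ℝ)..1, g u) / g (φ s)) s := by
  obtain ⟨e, he⟩ := exists_orderIso_eq_integral hg hε hgε
  set M := ∫ u in (0 : ℝ)..1, g u
  have hg0 : ∀ t, g t ≠ 0 := fun t => (hε.trans_le (hgε t)).ne'
  have hM : 0 ≤ M := integral_nonneg zero_le_one fun u _ => hε.le.trans (hgε u)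
  have he' : ∀ t, HasDerivAt e (g t) t :=
    funext he ▸ fun t => (hg.integral_hasStrictDerivAt 0 t).hasDerivAt
  have hsymm : ∀ z, HasDerivAt e.symm (g (e.symm z))⁻¹ z := fun z =>
    (he' _).of_local_left_inverse e.symm.continuous.continuousAt (hg0 _)
      (Filter.Eventually.of_forall e.apply_symm_apply)
  set φ : ℝ → ℝ := fun s => e.symm (M * s)
  have hφ : ∀ s, HasDerivAt φ (M / g (φ s)) s := fun s =>
    ((hsymm (M * s)).comp s ((hasDerivAt_id' s).const_mul M)).congr_deriv (by ring)
  have hφ0 : φ 0 = 0 := e.symm_apply_eq.2 (by simp [he])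
  have hφ1 : φ 1 = 1 := e.symm_apply_eq.2 (by simp [he, M])
  have hφmono : Monotone φ := e.symm.monotone.comp (monotone_mul_left_of_nonneg hM)
  refine ⟨φ, ?_, hφ0, hφ1, fun s hs => ⟨hφ0 ▸ hφmono hs.1, hφ1 ▸ hφmono hs.2⟩, hφ⟩
  refine contDiff_one_iff_deriv.2 ⟨fun s => (hφ s).differentiableAt, ?_⟩
  rw [funext fun s => (hφ s).deriv]
  exact continuous_const.div (hg.comp (e.symm.continuous.comp (continuous_const_mul M)))
    fun s => hg0 _

end Reparametrization

section QuasihyperbolicPaths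

open intervalIntegral

variable {X : Type*} [NormedAddCommGroup X] [NormedSpace ℝ X] {Ω : Set X} {x y : X}

def qhPaths (Ω : Set X) (x y : X) : Set (ℝ → X) :=
  {γ | ContDiff ℝ 1 γ ∧ MapsTo γ (Icc 0 1) Ω ∧ γ 0 = x ∧ γ 1 = y}

lemma ContDiff.continuousOn_norm_deriv_div_infDist {γ : ℝ → X} (hγ : ContDiff ℝ 1 γ)
    {s : Set ℝ} (hmap : MapsTo γ s Ω) (hΩ : IsOpen Ω) (hne : Ωᶜ.Nonempty) :
    ContinuousOn (fun t => ‖deriv γ t‖ / infDist (γ t) Ωᶜ) s :=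
  (hγ.continuous_deriv le_rfl).norm.continuousOn.div
    ((continuous_infDist_pt _).comp hγ.continuous).continuousOn
    fun _ ht => (hΩ.infDist_compl_pos hne (hmap ht)).ne'

lemma qhLength_nonneg (Ω : Set X) (γ : ℝ → X) : 0 ≤ qhLength Ω γ 0 1 :=
  integral_nonneg zero_le_one fun _ _ => div_nonneg (norm_nonneg _) infDist_nonneg

lemma qhDist_le_of_norm_deriv_le (hΩ : IsOpen Ω) (hne : Ωᶜ.Nonempty) {γ : ℝ → X}
    (hγ : γ ∈ qhPaths Ω x y) {R : ℝ}
    (hR : ∀ t ∈ Icc (0 : ℝ) 1, ‖deriv γ t‖ ≤ R * infDist (γ t) Ωᶜ) : qhDist Ω x y ≤ R :=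
  calc qhDist Ω x y ≤ qhLength Ω γ 0 1 :=
        csInf_le ⟨0, forall_mem_image.2 fun γ _ => qhLength_nonneg Ω γ⟩ (mem_image_of_mem _ hγ)
    _ ≤ ∫ _ in (0 : ℝ)..1, R :=
        integral_mono_on zero_le_one
          ((hγ.1.continuousOn_norm_deriv_div_infDist hγ.2.1 hΩ hne).intervalIntegrable_of_Icc
            zero_le_one) intervalIntegrable_const
          fun t ht => (div_le_iff₀ (hΩ.infDist_compl_pos hne (hγ.2.1 ht))).2 (hR t ht)
    _ = R := by simp

lemma exists_mem_qhPaths_norm_deriv_le_qhLength_add (hΩ : IsOpen Ω) (hne : Ωᶜ.Nonempty)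
    {γ : ℝ → X} (hγ : γ ∈ qhPaths Ω x y) {ε : ℝ} (hε : 0 < ε) :
    ∃ σ ∈ qhPaths Ω x y, ∀ s ∈ Icc (0 : ℝ) 1,
      ‖deriv σ s‖ ≤ (qhLength Ω γ 0 1 + ε) * infDist (σ s) Ωᶜ := by
  obtain ⟨hγC, hmap, h0, h1⟩ := hγ
  set w : ℝ → ℝ := fun t => ‖deriv γ t‖ / infDist (γ t) Ωᶜ
  have hw : ContinuousOn w (Icc 0 1) := hγC.continuousOn_norm_deriv_div_infDist hmap hΩ hne
  -- `w` is only continuous on `[0, 1]`; extend it by clamping the parameter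
  set π : ℝ → ℝ := fun t => projIcc (0 : ℝ) 1 zero_le_one t
  have hπ : ∀ t ∈ Icc (0 : ℝ) 1, π t = t := fun t ht => congrArg Subtype.val (projIcc_of_mem _ ht)
  set g : ℝ → ℝ := fun t => w (π t) + ε
  have hg : Continuous g :=
    (hw.comp_continuous (continuous_subtype_val.comp continuous_projIcc)
      fun t => (projIcc _ _ _ t).2).add continuous_const
  have hgε : ∀ t, ε ≤ g t := fun t =>
    le_add_of_nonneg_left (div_nonneg (norm_nonneg _) infDist_nonneg)
  have hM : ∫ u in (0 : ℝ)..1, g u = qhLength Ω γ 0 1 + ε := by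
    rw [integral_congr (g := fun u => w u + ε) fun u hu => by
        simp only [g, hπ u (uIcc_of_le (zero_le_one' ℝ) ▸ hu)],
      integral_add (hw.intervalIntegrable_of_Icc zero_le_one) intervalIntegrable_const]
    simp [qhLength, w]
  obtain ⟨φ, hφC, hφ0, hφ1, hφmap, hφ⟩ := exists_reparam_hasDerivAt_integral_div hg hε hgε
  refine ⟨γ ∘ φ, ⟨hγC.comp hφC, hmap.comp hφmap, by simp [hφ0, h0], by simp [hφ1, h1]⟩,
    fun s hs => ?_⟩
  have hτ := hφmap hs
  set τ := φ s
  set d := infDist (γ τ) Ωᶜ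
  have hd : 0 < d := hΩ.infDist_compl_pos hne (hmap hτ)
  have hgτ : g τ = ‖deriv γ τ‖ / d + ε := by simp only [g, w, hπ τ hτ, d]
  have hgpos : 0 < g τ := hε.trans_le (hgε τ)
  have hMpos : 0 ≤ qhLength Ω γ 0 1 + ε := by linarith [qhLength_nonneg Ω γ]
  rw [((hγC.differentiable one_ne_zero τ).hasDerivAt.scomp s (hφ s)).deriv, norm_smul,
    Real.norm_of_nonneg (div_nonneg (hM ▸ hMpos) hgpos.le), hM, div_mul_eq_mul_div,
    div_le_iff₀ hgpos]
  calc (qhLength Ω γ 0 1 + ε) * ‖deriv γ τ‖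
      ≤ (qhLength Ω γ 0 1 + ε) * (‖deriv γ τ‖ + ε * d) := by
        gcongr; exact le_add_of_nonneg_right (by positivity)
    _ = (qhLength Ω γ 0 1 + ε) * d * g τ := by rw [hgτ]; field_simp

lemma Convex.segment_mem_qhPaths (hconv : Convex ℝ Ω) (hx : x ∈ Ω) (hy : y ∈ Ω) :
    (fun t : ℝ => x + t • (y - x)) ∈ qhPaths Ω x y :=
  ⟨by fun_prop,
    fun _ ht => hconv.segment_subset hx hy (segment_eq_image' ℝ x y ▸ mem_image_of_mem _ ht),
    by simp, by simp⟩

lemma Convex.combo_mem_qhPaths (hconv : Convex ℝ Ω) {y₁ y₂ : X} {γ₁ γ₂ : ℝ → X}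
    (hγ₁ : γ₁ ∈ qhPaths Ω x y₁) (hγ₂ : γ₂ ∈ qhPaths Ω x y₂) {a b : ℝ} (ha : 0 ≤ a) (hb : 0 ≤ b)
    (hab : a + b = 1) : a • γ₁ + b • γ₂ ∈ qhPaths Ω x (a • y₁ + b • y₂) :=
  ⟨(hγ₁.1.const_smul a).add (hγ₂.1.const_smul b),
    fun _ ht => hconv (hγ₁.2.1 ht) (hγ₂.2.1 ht) ha hb hab,
    by simp [hγ₁.2.2.1, hγ₂.2.2.1, ← add_smul, hab], by simp [hγ₁.2.2.2, hγ₂.2.2.2]⟩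

lemma exists_mem_qhPaths_norm_deriv_le (hΩ : IsOpen Ω) (hne : Ωᶜ.Nonempty)
    (hpaths : (qhPaths Ω x y).Nonempty) {R : ℝ} (hR : qhDist Ω x y < R) :
    ∃ γ ∈ qhPaths Ω x y, ∀ t ∈ Icc (0 : ℝ) 1, ‖deriv γ t‖ ≤ R * infDist (γ t) Ωᶜ := by
  obtain ⟨_, ⟨γ, hγ, rfl⟩, hlt⟩ := exists_lt_of_csInf_lt (hpaths.image _) hR
  obtain ⟨σ, hσ, hσR⟩ :=
    exists_mem_qhPaths_norm_deriv_le_qhLength_add hΩ hne hγ (sub_pos.2 hlt)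
  exact ⟨σ, hσ, by simpa using hσR⟩

theorem Convex.qhDist_combo_le (hconv : Convex ℝ Ω) (hΩ : IsOpen Ω) (hne : Ωᶜ.Nonempty)
    (hx : x ∈ Ω) {y₁ y₂ : X} (hy₁ : y₁ ∈ Ω) (hy₂ : y₂ ∈ Ω) {R : ℝ} (h₁ : qhDist Ω x y₁ < R)
    (h₂ : qhDist Ω x y₂ < R) {a b : ℝ} (ha : 0 ≤ a) (hb : 0 ≤ b) (hab : a + b = 1) :
    qhDist Ω x (a • y₁ + b • y₂) ≤ R := by
  obtain ⟨γ₁, hγ₁, hR₁⟩ :=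
    exists_mem_qhPaths_norm_deriv_le hΩ hne ⟨_, hconv.segment_mem_qhPaths hx hy₁⟩ h₁
  obtain ⟨γ₂, hγ₂, hR₂⟩ :=
    exists_mem_qhPaths_norm_deriv_le hΩ hne ⟨_, hconv.segment_mem_qhPaths hx hy₂⟩ h₂
  refine qhDist_le_of_norm_deriv_le hΩ hne (hconv.combo_mem_qhPaths hγ₁ hγ₂ ha hb hab)
    fun t ht => ?_
  have hderiv : HasDerivAt (a • γ₁ + b • γ₂) (a • deriv γ₁ t + b • deriv γ₂ t) t :=
    ((hγ₁.1.differentiable one_ne_zero t).hasDerivAt.const_smul a).add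
      ((hγ₂.1.differentiable one_ne_zero t).hasDerivAt.const_smul b)
  rw [hderiv.deriv]
  exact norm_combo_le_mul_infDist_compl hconv hΩ hne (hγ₁.2.1 ht) (hγ₂.2.1 ht) ha hb hab
    (hR₁ t ht) (hR₂ t ht)

end QuasihyperbolicPaths

theorem qhBall_convex_of_convex_domain_general
    {X : Type*} [NormedAddCommGroup X] [NormedSpace ℝ X]
    (Ω : Set X) (hΩopen : IsOpen Ω) (hΩconv : Convex ℝ Ω)
    (hΩproper : Ω ≠ Set.univ)
    (x : X) (hx : x ∈ Ω) (r : ℝ) :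
    Convex ℝ {y ∈ Ω | qhDist Ω x y ≤ r} := by
  rintro y₁ ⟨hy₁, h₁⟩ y₂ ⟨hy₂, h₂⟩ a b ha hb hab
  refine ⟨hΩconv hy₁ hy₂ ha hb hab, le_of_forall_gt_imp_ge_of_dense fun R hR => ?_⟩
  exact hΩconv.qhDist_combo_le hΩopen (nonempty_compl.2 hΩproper) hx hy₁ hy₂
    (h₁.trans_lt hR) (h₂.trans_lt hR) ha hb hab

/-- On a convex domain of a Banach space, every closed quasihyperbolic ball is convex. -/
theorem qhBall_convex_of_convex_domain
    {X : Type*} [NormedAddCommGroup X] [NormedSpace ℝ X] [CompleteSpace X]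
    (Ω : Set X) (hΩopen : IsOpen Ω) (hΩconn : IsConnected Ω) (hΩconv : Convex ℝ Ω)
    (hΩproper : Ω ≠ Set.univ)
    (x : X) (hx : x ∈ Ω) (r : ℝ) (hr : 0 < r) :
    Convex ℝ {y ∈ Ω | qhDist Ω x y ≤ r} :=
  qhBall_convex_of_convex_domain_general Ω hΩopen hΩconv hΩproper x hx r
end

section
/- Let X be a real Banach space, x₀ ∈ X, and Ω ⊆ X an open set that is starlike with respect to x₀ (with x₀ ∈ Ω and Ω ≠ X). Then for every x ∈ Ω and s ∈ [0,1], dist(s·x + (1−s)·x₀, X ∖ Ω) ≥ s·dist(x, X ∖ Ω). -/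
/-- If an open proper subset `Ω` of a Banach space is starlike with respect to `x₀`, then
`dist(s·x + (1−s)·x₀, X ∖ Ω) ≥ s·dist(x, X ∖ Ω)` for all `x ∈ Ω` and `s ∈ [0,1]`. -/
theorem infDist_compl_starlike_estimate
    {X : Type*} [NormedAddCommGroup X] [NormedSpace ℝ X] [CompleteSpace X]
    (Ω : Set X) (hΩopen : IsOpen Ω) (hΩproper : Ω ≠ Set.univ)
    (x₀ : X) (hx₀ : x₀ ∈ Ω)
    (hstar : ∀ y ∈ Ω, ∀ t ∈ Set.Icc (0 : ℝ) 1, t • x₀ + (1 - t) • y ∈ Ω)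
    (x : X) (hx : x ∈ Ω) (s : ℝ) (hs : s ∈ Set.Icc (0 : ℝ) 1) :
    s * Metric.infDist x Ωᶜ ≤ Metric.infDist (s • x + (1 - s) • x₀) Ωᶜ := by
  obtain ⟨hs0, hs1⟩ := hs
  have hne : Ωᶜ.Nonempty := by
    rw [Set.nonempty_compl]; exact hΩproper
  rcases eq_or_lt_of_le hs0 with rfl | hspos
  · simpa using Metric.infDist_nonneg
  · rw [← not_lt, Metric.infDist_lt_iff hne]
    push_neg
    intro z hz
    set w : X := s⁻¹ • (z - (1 - s) • x₀) with hw
    have hsw : s • w = z - (1 - s) • x₀ := smul_inv_smul₀ (ne_of_gt hspos) _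
    have hwc : w ∈ Ωᶜ := by
      intro hwΩ
      apply hz
      have := hstar w hwΩ (1 - s) ⟨by linarith, by linarith⟩
      have h1 : (1 - (1 - s)) • w = s • w := by ring_nf
      rw [h1, hsw] at this
      simpa using this
    have h1 : Metric.infDist x Ωᶜ ≤ dist x w := Metric.infDist_le_dist_of_mem hwc
    calc s * Metric.infDist x Ωᶜ ≤ s * dist x w := by
          exact mul_le_mul_of_nonneg_left h1 hs0
      _ = dist (s • x + (1 - s) • x₀) z := by
          rw [dist_eq_norm, dist_eq_norm, ← norm_smul_of_nonneg hs0, smul_sub, hsw]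
          congr 1
          abel
end

section
/- Let X be a real Banach space, x₀ ∈ X, and let Ω ⊊ X be a domain that is starlike with respect to x₀. Then for every r > 0 the closed j-ball B_j(x₀, r) = {y ∈ Ω : j_Ω(x₀, y) ≤ r} is starlike with respect to x₀. -/
/-- If a domain `Ω` of a Banach space is starlike with respect to `x₀`, then every closed
`j`-ball centered at `x₀` is starlike with respect to `x₀`. -/
theorem jBall_starlike_of_starlike_domain
    {X : Type*} [NormedAddCommGroup X] [NormedSpace ℝ X] [CompleteSpace X]
    (Ω : Set X) (hΩopen : IsOpen Ω) (hΩconn : IsConnected Ω) (hΩproper : Ω ≠ Set.univ)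
    (x₀ : X) (hx₀ : x₀ ∈ Ω)
    (hstar : ∀ y ∈ Ω, ∀ t ∈ Set.Icc (0 : ℝ) 1, t • x₀ + (1 - t) • y ∈ Ω)
    (r : ℝ) (hr : 0 < r) :
    ∀ y ∈ {y ∈ Ω | jDist Ω x₀ y ≤ r}, ∀ t ∈ Set.Icc (0 : ℝ) 1,
      t • x₀ + (1 - t) • y ∈ {y ∈ Ω | jDist Ω x₀ y ≤ r} := by
  intro y hy t ht
  obtain ⟨hyΩ, hyj⟩ := hy
  obtain ⟨ht0, ht1⟩ := ht
  have hne : Ωᶜ.Nonempty := by rwa [Set.nonempty_compl]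
  have hclosed : IsClosed Ωᶜ := hΩopen.isClosed_compl
  have hd0 : 0 < Metric.infDist x₀ Ωᶜ := by
    rw [← hclosed.notMem_iff_infDist_pos hne]; simpa using hx₀
  have hdy : 0 < Metric.infDist y Ωᶜ := by
    rw [← hclosed.notMem_iff_infDist_pos hne]; simpa using hyΩ
  set z := t • x₀ + (1 - t) • y with hz
  have hzΩ : z ∈ Ω := hstar y hyΩ t ⟨ht0, ht1⟩
  refine ⟨hzΩ, ?_⟩
  rcases eq_or_lt_of_le ht1 with h1 | h1
  · have hzx : z = x₀ := by rw [hz, h1]; simp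
    rw [hzx]
    simp only [jDist, sub_self, norm_zero, zero_div, add_zero, Real.log_one]
    exact hr.le
  · have h1t : 0 < 1 - t := by linarith
    -- distance of z to the complement is at least (1-t) * d(y)
    have hdz : (1 - t) * Metric.infDist y Ωᶜ ≤ Metric.infDist z Ωᶜ := by
      by_contra hlt
      push_neg at hlt
      obtain ⟨w, hw, hwd⟩ := (Metric.infDist_lt_iff hne).mp hlt
      set p := y + (1 - t)⁻¹ • (w - z) with hp
      have hpΩ : p ∈ Ω := by
        by_contra hpc
        have hle := Metric.infDist_le_dist_of_mem (x := y) (show p ∈ Ωᶜ from hpc)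
        have hdist : dist y p = (1 - t)⁻¹ * dist z w := by
          rw [hp, dist_eq_norm']
          simp only [add_sub_cancel_left]
          rw [norm_smul, Real.norm_eq_abs, abs_of_pos (inv_pos.mpr h1t),
            dist_eq_norm, norm_sub_rev]
        rw [hdist] at hle
        have : (1 - t)⁻¹ * dist z w < (1 - t)⁻¹ * ((1 - t) * Metric.infDist y Ωᶜ) :=
          mul_lt_mul_of_pos_left hwd (inv_pos.mpr h1t)
        rw [← mul_assoc, inv_mul_cancel₀ h1t.ne', one_mul] at this
        linarith
      have hwΩ : w ∈ Ω := by
        have hmem := hstar p hpΩ t ⟨ht0, ht1⟩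
        have : t • x₀ + (1 - t) • p = w := by
          rw [hp, smul_add, smul_smul, mul_inv_cancel₀ h1t.ne', one_smul]
          rw [hz]; abel
        rwa [this] at hmem
      exact hw hwΩ
    set m := min (Metric.infDist x₀ Ωᶜ) (Metric.infDist y Ωᶜ) with hm
    have hmpos : 0 < m := lt_min hd0 hdy
    have hmz : (1 - t) * m ≤ min (Metric.infDist x₀ Ωᶜ) (Metric.infDist z Ωᶜ) := by
      refine le_min ?_ ?_
      · calc (1 - t) * m ≤ 1 * m := by
              apply mul_le_mul_of_nonneg_right (by linarith) hmpos.le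
          _ = m := one_mul m
          _ ≤ _ := min_le_left _ _
      · calc (1 - t) * m ≤ (1 - t) * Metric.infDist y Ωᶜ :=
              mul_le_mul_of_nonneg_left (min_le_right _ _) h1t.le
          _ ≤ _ := hdz
    have hnorm : ‖x₀ - z‖ = (1 - t) * ‖x₀ - y‖ := by
      have : x₀ - z = (1 - t) • (x₀ - y) := by
        rw [hz, smul_sub]
        module
      rw [this, norm_smul, Real.norm_eq_abs, abs_of_pos h1t]
    have hkey : ‖x₀ - z‖ / min (Metric.infDist x₀ Ωᶜ) (Metric.infDist z Ωᶜ)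
        ≤ ‖x₀ - y‖ / m := by
      calc ‖x₀ - z‖ / min (Metric.infDist x₀ Ωᶜ) (Metric.infDist z Ωᶜ)
          ≤ ‖x₀ - z‖ / ((1 - t) * m) :=
            div_le_div_of_nonneg_left (norm_nonneg _) (mul_pos h1t hmpos) hmz
        _ = (1 - t) * ‖x₀ - y‖ / ((1 - t) * m) := by rw [hnorm]
        _ = ‖x₀ - y‖ / m := mul_div_mul_left _ _ h1t.ne'
    refine le_trans ?_ hyj
    unfold jDist
    apply Real.log_le_log
    · have h1 : 0 ≤ ‖x₀ - z‖ / min (Metric.infDist x₀ Ωᶜ) (Metric.infDist z Ωᶜ) :=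
        div_nonneg (norm_nonneg _) (le_trans (by positivity) hmz)
      linarith
    · linarith
end

section
/- Let X be a real Banach space, x₀ ∈ X, and let Ω ⊊ X be a domain that is starlike with respect to x₀. Then for every r > 0 the closed quasihyperbolic ball B_k(x₀, r) = {y ∈ Ω : k_Ω(x₀, y) ≤ r} is starlike with respect to x₀. -/
open Set Metric

theorem IsOpen.infDist_compl_pos_s9 {α : Type*} [PseudoMetricSpace α] {s : Set α} {x : α}
    (hs : IsOpen s) (hne : s ≠ univ) (hx : x ∈ s) : 0 < infDist x sᶜ :=
  (hs.isClosed_compl.notMem_iff_infDist_pos (nonempty_compl.2 hne)).1 (not_not.2 hx)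

section

variable {X : Type*} [NormedAddCommGroup X] [NormedSpace ℝ X] {Ω : Set X} {x₀ x y : X}
  {γ : ℝ → X} {t : ℝ}

theorem StarConvex.mul_infDist_compl_le (hs : StarConvex ℝ x₀ Ω) (x : X)
    (ht : t ∈ Icc (0 : ℝ) 1) :
    (1 - t) * infDist x Ωᶜ ≤ infDist (t • x₀ + (1 - t) • x) Ωᶜ := by
  rcases Ωᶜ.eq_empty_or_nonempty with hc | hc
  · simp [hc]
  rcases ht.2.eq_or_lt with rfl | ht1
  · simp [infDist_nonneg]
  have hpos : 0 < 1 - t := sub_pos.2 ht1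
  refine (le_infDist hc).2 fun w hw => ?_
  set p := (1 - t)⁻¹ • (w - t • x₀)
  have hwp : t • x₀ + (1 - t) • p = w := by simp [p, smul_inv_smul₀ hpos.ne']
  have hp : p ∉ Ω := fun hp => hw (hwp ▸ hs hp ht.1 hpos.le (by ring))
  calc (1 - t) * infDist x Ωᶜ ≤ (1 - t) * dist x p :=
        mul_le_mul_of_nonneg_left (infDist_le_dist_of_mem hp) hpos.le
    _ = dist (t • x₀ + (1 - t) • x) w := by
        rw [← hwp, dist_add_left, dist_smul₀, Real.norm_of_nonneg hpos.le]

theorem StarConvex.qhIntegrand_homothety_le (hs : StarConvex ℝ x₀ Ω) (hΩ : IsOpen Ω)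
    (hne : Ω ≠ univ) (hx : x ∈ Ω) (v : X) (ht : t ∈ Icc (0 : ℝ) 1) :
    ‖(1 - t) • v‖ / infDist (t • x₀ + (1 - t) • x) Ωᶜ ≤ ‖v‖ / infDist x Ωᶜ := by
  have h1t : 0 ≤ 1 - t := sub_nonneg.2 ht.2
  have hx' := hΩ.infDist_compl_pos_s9 hne hx
  have hhx := hΩ.infDist_compl_pos_s9 hne (hs hx ht.1 h1t (add_sub_cancel t 1))
  rw [norm_smul, Real.norm_of_nonneg h1t, div_le_div_iff₀ hhx hx', mul_comm (1 - t), mul_assoc]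
  exact mul_le_mul_of_nonneg_left (hs.mul_infDist_compl_le x ht) (norm_nonneg v)

theorem intervalIntegrable_qhIntegrand (hΩ : IsOpen Ω) (hne : Ω ≠ univ) (hγ : ContDiff ℝ 1 γ)
    {a b : ℝ} (hmaps : MapsTo γ (uIcc a b) Ω) :
    IntervalIntegrable (fun u => ‖deriv γ u‖ / infDist (γ u) Ωᶜ) MeasureTheory.volume a b :=
  ContinuousOn.intervalIntegrable <|
    (hγ.continuous_deriv le_rfl).norm.continuousOn.div
      ((continuous_infDist_pt _).comp hγ.continuous).continuousOn
      fun _ hu => (hΩ.infDist_compl_pos_s9 hne (hmaps hu)).ne'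

theorem StarConvex.qhLength_homothety_le (hs : StarConvex ℝ x₀ Ω) (hΩ : IsOpen Ω)
    (hne : Ω ≠ univ) (hγ : ContDiff ℝ 1 γ) {a b : ℝ} (hab : a ≤ b)
    (hmaps : MapsTo γ (Icc a b) Ω) (ht : t ∈ Icc (0 : ℝ) 1) :
    qhLength Ω (fun u => t • x₀ + (1 - t) • γ u) a b ≤ qhLength Ω γ a b := by
  have hderiv : ∀ u, deriv (fun u => t • x₀ + (1 - t) • γ u) u = (1 - t) • deriv γ u := fun u =>
    ((((hγ.differentiable one_ne_zero) u).hasDerivAt.const_smul (1 - t)).const_add _).deriv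
  have hmaps' : MapsTo (fun u => t • x₀ + (1 - t) • γ u) (Icc a b) Ω := fun _ hu =>
    hs (hmaps hu) ht.1 (sub_nonneg.2 ht.2) (add_sub_cancel t 1)
  rw [← uIcc_of_le hab] at hmaps hmaps'
  refine intervalIntegral.integral_mono_on hab
    (intervalIntegrable_qhIntegrand hΩ hne (contDiff_const.add (hγ.const_smul _)) hmaps')
    (intervalIntegrable_qhIntegrand hΩ hne hγ hmaps) fun u hu => ?_
  rw [hderiv]
  exact hs.qhIntegrand_homothety_le hΩ hne (hmaps (Icc_subset_uIcc hu)) _ ht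

/-- The paths over which `qhDist Ω x y` takes its infimum. -/
def qhAdmissible (Ω : Set X) (x y : X) : Set (ℝ → X) :=
  {γ | ContDiff ℝ 1 γ ∧ MapsTo γ (Icc 0 1) Ω ∧ γ 0 = x ∧ γ 1 = y}

theorem qhLength_nonneg_s9 {a b : ℝ} (hab : a ≤ b) : 0 ≤ qhLength Ω γ a b :=
  intervalIntegral.integral_nonneg hab fun _ _ => div_nonneg (norm_nonneg _) infDist_nonneg

theorem qhDist_le_qhLength (hγ : γ ∈ qhAdmissible Ω x y) : qhDist Ω x y ≤ qhLength Ω γ 0 1 :=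
  csInf_le ⟨0, forall_mem_image.2 fun _ _ => qhLength_nonneg_s9 zero_le_one⟩ (mem_image_of_mem _ hγ)

theorem le_qhDist {c : ℝ} (hne : (qhAdmissible Ω x y).Nonempty)
    (h : ∀ γ ∈ qhAdmissible Ω x y, c ≤ qhLength Ω γ 0 1) : c ≤ qhDist Ω x y :=
  le_csInf (hne.image _) (forall_mem_image.2 h)

theorem StarConvex.segment_mem_qhAdmissible (hs : StarConvex ℝ x₀ Ω) (hy : y ∈ Ω) :
    (fun u : ℝ => (1 - u) • x₀ + u • y) ∈ qhAdmissible Ω x₀ y :=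
  ⟨by fun_prop, fun _ hu => hs hy (sub_nonneg.2 hu.2) hu.1 (sub_add_cancel 1 _), by simp, by simp⟩

theorem StarConvex.homothety_mem_qhAdmissible (hs : StarConvex ℝ x₀ Ω)
    (hγ : γ ∈ qhAdmissible Ω x₀ y) (ht : t ∈ Icc (0 : ℝ) 1) :
    (fun u => t • x₀ + (1 - t) • γ u) ∈ qhAdmissible Ω x₀ (t • x₀ + (1 - t) • y) := by
  obtain ⟨hdiff, hmaps, h0, h1⟩ := hγ
  refine ⟨contDiff_const.add (hdiff.const_smul _),
    fun _ hu => hs (hmaps hu) ht.1 (sub_nonneg.2 ht.2) (add_sub_cancel t 1), ?_, by simp [h1]⟩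
  simp [h0, ← add_smul]

theorem StarConvex.qhDist_homothety_le (hs : StarConvex ℝ x₀ Ω) (hΩ : IsOpen Ω)
    (hne : Ω ≠ univ) (hy : y ∈ Ω) (ht : t ∈ Icc (0 : ℝ) 1) :
    qhDist Ω x₀ (t • x₀ + (1 - t) • y) ≤ qhDist Ω x₀ y :=
  le_qhDist ⟨_, hs.segment_mem_qhAdmissible hy⟩ fun _ hγ =>
    (qhDist_le_qhLength (hs.homothety_mem_qhAdmissible hγ ht)).trans
      (hs.qhLength_homothety_le hΩ hne hγ.1 zero_le_one hγ.2.1 ht)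

end

theorem qhBall_starlike_of_starlike_domain_general
    {X : Type*} [NormedAddCommGroup X] [NormedSpace ℝ X]
    (Ω : Set X) (hΩopen : IsOpen Ω) (hΩproper : Ω ≠ Set.univ)
    (x₀ : X)
    (hstar : ∀ y ∈ Ω, ∀ t ∈ Set.Icc (0 : ℝ) 1, t • x₀ + (1 - t) • y ∈ Ω)
    (r : ℝ) :
    ∀ y ∈ {y ∈ Ω | qhDist Ω x₀ y ≤ r}, ∀ t ∈ Set.Icc (0 : ℝ) 1,
      t • x₀ + (1 - t) • y ∈ {y ∈ Ω | qhDist Ω x₀ y ≤ r} := by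
  have hs : StarConvex ℝ x₀ Ω := fun y hy a b ha _ hab =>
    (eq_sub_of_add_eq' hab) ▸ hstar y hy a ⟨ha, by linarith⟩
  rintro y ⟨hy, hyr⟩ t ht
  exact ⟨hstar y hy t ht, (hs.qhDist_homothety_le hΩopen hΩproper hy ht).trans hyr⟩

/-- If a domain `Ω` of a Banach space is starlike with respect to `x₀`, then every closed
quasihyperbolic ball centered at `x₀` is starlike with respect to `x₀`. -/
theorem qhBall_starlike_of_starlike_domain
    {X : Type*} [NormedAddCommGroup X] [NormedSpace ℝ X] [CompleteSpace X]
    (Ω : Set X) (hΩopen : IsOpen Ω) (hΩconn : IsConnected Ω) (hΩproper : Ω ≠ Set.univ)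
    (x₀ : X) (hx₀ : x₀ ∈ Ω)
    (hstar : ∀ y ∈ Ω, ∀ t ∈ Set.Icc (0 : ℝ) 1, t • x₀ + (1 - t) • y ∈ Ω)
    (r : ℝ) (hr : 0 < r) :
    ∀ y ∈ {y ∈ Ω | qhDist Ω x₀ y ≤ r}, ∀ t ∈ Set.Icc (0 : ℝ) 1,
      t • x₀ + (1 - t) • y ∈ {y ∈ Ω | qhDist Ω x₀ y ≤ r} :=
  qhBall_starlike_of_starlike_domain_general Ω hΩopen hΩproper x₀ hstar r
end

section
/- Let X be a real Banach space that is uniformly convex and uniformly smooth, both moduli of power type 2 (δ_X(ε) ≥ M·ε², ρ_X(τ) ≤ K·τ² for some M, K > 0), and let Ω = X ∖ {0} with ℓ_k(γ) = ∫ ‖γ′(t)‖/‖γ(t)‖ dt. Then there exists R > 0 such that if γ₁, γ₂ : [0, t₁] → Ω are rectifiable, almost everywhere differentiable paths with the same starting point γ₁(0) = γ₂(0), unit speed ‖γ₁′(t)‖ = ‖γ₂′(t)‖ = 1 for a.e. t, images of γ₁, γ₂ and (γ₁+γ₂)/2 contained in {z : 1 ≤ ‖z‖ ≤ 2}, and equal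 quasihyperbolic lengths ℓ_k(γ₁) = ℓ_k(γ₂) ≤ R, then either (ℓ_k(γ₁) + ℓ_k(γ₂))/2 > ℓ_k((γ₁+γ₂)/2) or γ₁ = γ₂. -/
/-!
For the quasihyperbolic integrands `k(γ) = ‖γ′‖/‖γ‖`, power-type-2 convexity applied to the unit
tangents and power-type-2 smoothness applied to the points give, pointwise in the annulus,
`k(mid) + (M/2)‖γ₁′ - γ₂′‖² ≤ (k(γ₁) + k(γ₂))/2 + (K/4)‖γ₁ - γ₂‖²`.
Since the paths start together, `‖γ₁ - γ₂‖ ≤ ∫ ‖γ₁′ - γ₂′‖`, so by Cauchy–Schwarz the integrated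
error term is at most `(K/4) t₁²` times the integrated gain `∫ ‖γ₁′ - γ₂′‖²`. In the annulus
`t₁ ≤ 2 ℓ_k(γ₁)`, so for short paths the gain wins, strictly unless `γ₁′ = γ₂′` a.e., in which
case `γ₁ = γ₂`.
-/

/-- The modulus of convexity of a normed space `X`:
`δ_X(ε) = inf{1 − ‖x+y‖/2 : ‖x‖ = ‖y‖ = 1, ‖x − y‖ = ε}`. -/
noncomputable def modulusConvexity (X : Type*) [NormedAddCommGroup X] (ε : ℝ) : ℝ :=
  sInf {c | ∃ x y : X, ‖x‖ = 1 ∧ ‖y‖ = 1 ∧ ‖x - y‖ = ε ∧ c = 1 - ‖x + y‖ / 2}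

/-- The modulus of smoothness of a normed space `X`:
`ρ_X(τ) = sup{(‖x+y‖ + ‖x−y‖)/2 − 1 : ‖x‖ = 1, ‖y‖ = τ}`. -/
noncomputable def modulusSmoothness (X : Type*) [NormedAddCommGroup X] (τ : ℝ) : ℝ :=
  sSup {c | ∃ x y : X, ‖x‖ = 1 ∧ ‖y‖ = τ ∧ c = (‖x + y‖ + ‖x - y‖) / 2 - 1}

/-- The quasihyperbolic length on the punctured space `Ω = X ∖ {0}` (where `d(x) = ‖x‖`)
of a path `γ` over `[a,b]`: `ℓ_k(γ; a, b) = ∫ₐᵇ ‖γ′(t)‖/‖γ(t)‖ dt`. -/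
noncomputable def qhLengthPunct {X : Type*} [NormedAddCommGroup X] [NormedSpace ℝ X]
    (γ : ℝ → X) (a b : ℝ) : ℝ :=
  ∫ t in a..b, ‖deriv γ t‖ / ‖γ t‖

open MeasureTheory Set Interval

section Lipschitz

variable {E : Type*} [NormedAddCommGroup E] [NormedSpace ℝ E]
  {f : ℝ → E} {L : NNReal} {a b : ℝ}

theorem LipschitzOnWith.ae_norm_deriv_le (hf : LipschitzOnWith L f (Icc a b)) :
    ∀ᵐ t ∂volume.restrict (Icc a b), ‖deriv f t‖ ≤ L := by
  rw [← Measure.restrict_congr_set Ioo_ae_eq_Icc, ae_restrict_iff' measurableSet_Ioo]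
  exact .of_forall fun t ht => norm_deriv_le_of_lipschitzOn (Icc_mem_nhds ht.1 ht.2) hf

variable [CompleteSpace E]

theorem LipschitzOnWith.integrableOn_deriv (hf : LipschitzOnWith L f (Icc a b)) :
    IntegrableOn (deriv f) (Icc a b) :=
  .of_bound measure_Icc_lt_top (stronglyMeasurable_deriv f).aestronglyMeasurable L
    hf.ae_norm_deriv_le

theorem LipschitzOnWith.lipschitzOnWith_integral_deriv (hf : LipschitzOnWith L f (Icc a b)) :
    LipschitzOnWith L (fun x => ∫ t in a..x, deriv f t) (Icc a b) := by
  refine LipschitzOnWith.of_dist_le_mul fun x hx y hy => ?_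
  have hint : ∀ z ∈ Icc a b, IntervalIntegrable (deriv f) volume a z := fun z hz =>
    (hf.integrableOn_deriv.mono_set
      (uIcc_subset_Icc (left_mem_Icc.2 (hz.1.trans hz.2)) hz)).intervalIntegrable
  rw [dist_eq_norm, intervalIntegral.integral_interval_sub_left (hint x hx) (hint y hy),
    Real.dist_eq]
  refine intervalIntegral.norm_integral_le_of_norm_le_const_ae ?_
  have hsub : Ι y x ⊆ Icc a b := uIoc_subset_uIcc.trans (uIcc_subset_Icc hy hx)
  filter_upwards [ae_imp_of_ae_restrict hf.ae_norm_deriv_le] with t ht hty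
  exact ht (hsub hty)

theorem LipschitzOnWith.integral_deriv_eq_sub (hab : a ≤ b) (hf : LipschitzOnWith L f (Icc a b))
    (hd : ∀ᵐ t ∂volume.restrict (Icc a b), DifferentiableAt ℝ f t) :
    ∫ t in a..b, deriv f t = f b - f a := by
  set F := fun x => ∫ t in a..x, deriv f t
  have hac : AbsolutelyContinuousOnInterval (fun x => f x - F x) a b := by
    apply LipschitzOnWith.absolutelyContinuousOnInterval (K := L + L)
    rw [uIcc_of_le hab]
    exact hf.sub hf.lipschitzOnWith_integral_deriv
  have hint : IntervalIntegrable (deriv f) volume a b :=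
    (uIcc_of_le hab ▸ hf.integrableOn_deriv).intervalIntegrable
  have hzero : ∀ᵐ t, t ∈ uIcc a b → HasDerivAt (fun x => f x - F x) 0 t := by
    rw [uIcc_of_le hab]
    filter_upwards [ae_imp_of_ae_restrict hd, uIcc_of_le hab ▸ hint.ae_hasDerivAt_integral]
      with t hft hFt ht
    have h := (hft ht).hasDerivAt.sub (hFt ht a (left_mem_Icc.2 hab))
    rwa [sub_self] at h
  obtain ⟨C, hC⟩ := hac.const_of_ae_hasDerivAt_zero hzero
  have ha := hC a left_mem_uIcc
  have hb := hC b right_mem_uIcc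
  simp only [F, intervalIntegral.integral_same, sub_zero] at ha hb
  rw [← ha] at hb
  rw [sub_eq_iff_eq_add.1 hb]; abel

theorem LipschitzOnWith.norm_sub_le_integral_norm_deriv (hab : a ≤ b)
    (hf : LipschitzOnWith L f (Icc a b))
    (hd : ∀ᵐ t ∂volume.restrict (Icc a b), DifferentiableAt ℝ f t) :
    ‖f b - f a‖ ≤ ∫ t in Icc a b, ‖deriv f t‖ := by
  rw [← hf.integral_deriv_eq_sub hab hd, intervalIntegral.integral_of_le hab,
    ← integral_Icc_eq_integral_Ioc]
  exact norm_integral_le_integral_norm _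

end Lipschitz

section CauchySchwarz

variable {α : Type*} [MeasurableSpace α] {μ : Measure α} [IsFiniteMeasure μ] {f g : α → ℝ}

theorem sq_integral_le_measureReal_mul_integral_sq (hg : Integrable g μ)
    (hg2 : Integrable (fun x => g x ^ 2) μ) :
    (∫ x, g x ∂μ) ^ 2 ≤ μ.real univ * ∫ x, g x ^ 2 ∂μ := by
  rcases eq_zero_or_neZero μ with rfl | _
  · simp
  set T := μ.real univ
  set A := ∫ x, g x ∂μ
  have hexpand : ∫ x, (T * g x - A) ^ 2 ∂μ = T * (T * ∫ x, g x ^ 2 ∂μ - A ^ 2) := by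
    have h : ∀ x, (T * g x - A) ^ 2 = T ^ 2 * g x ^ 2 - 2 * T * A * g x + A ^ 2 := fun x => by
      ring
    simp_rw [h]
    have hquad : Integrable (fun x => T ^ 2 * g x ^ 2 - 2 * T * A * g x) μ :=
      (hg2.const_mul _).sub (hg.const_mul _)
    rw [integral_add hquad (integrable_const _), integral_sub (hg2.const_mul _) (hg.const_mul _),
      integral_const_mul, integral_const_mul, integral_const, smul_eq_mul]
    ring
  have h := hexpand ▸ integral_nonneg fun x => sq_nonneg (T * g x - A)
  nlinarith [measureReal_univ_pos (μ := μ)]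

theorem integral_sq_le_of_abs_le_integral (hg : Integrable g μ)
    (hg2 : Integrable (fun x => g x ^ 2) μ) (hf : ∀ᵐ x ∂μ, |f x| ≤ ∫ y, g y ∂μ) :
    ∫ x, f x ^ 2 ∂μ ≤ μ.real univ ^ 2 * ∫ x, g x ^ 2 ∂μ := by
  have hfA : ∫ x, f x ^ 2 ∂μ ≤ μ.real univ * (∫ y, g y ∂μ) ^ 2 := by
    refine (integral_mono_of_nonneg (.of_forall fun x => sq_nonneg (f x)) (integrable_const _)
      ?_).trans_eq (by rw [integral_const, smul_eq_mul])
    filter_upwards [hf] with x hx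
    exact sq_le_sq' (abs_le.1 hx).1 (abs_le.1 hx).2
  calc ∫ x, f x ^ 2 ∂μ ≤ μ.real univ * (∫ y, g y ∂μ) ^ 2 := hfA
    _ ≤ μ.real univ * (μ.real univ * ∫ x, g x ^ 2 ∂μ) := by
      gcongr
      exact sq_integral_le_measureReal_mul_integral_sq hg hg2
    _ = μ.real univ ^ 2 * ∫ x, g x ^ 2 ∂μ := by ring

end CauchySchwarz

theorem two_div_add_le_inv_add_inv {a b : ℝ} (ha : 0 < a) (hb : 0 < b) :
    2 / (a + b) ≤ (a⁻¹ + b⁻¹) / 2 := by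
  rw [inv_add_inv ha.ne' hb.ne', div_div, div_le_div_iff₀ (by positivity) (by positivity)]
  nlinarith [sq_nonneg (a - b)]

section Moduli

variable {X : Type*} [NormedAddCommGroup X]

theorem modulusConvexity_le {x y : X} (hx : ‖x‖ = 1) (hy : ‖y‖ = 1) :
    modulusConvexity X ‖x - y‖ ≤ 1 - ‖x + y‖ / 2 := by
  refine csInf_le ⟨0, ?_⟩ ⟨x, y, hx, hy, rfl, rfl⟩
  rintro c ⟨x', y', hx', hy', -, rfl⟩
  linarith [norm_add_le x' y']

theorem le_modulusSmoothness {x y : X} (hx : ‖x‖ = 1) :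
    (‖x + y‖ + ‖x - y‖) / 2 - 1 ≤ modulusSmoothness X ‖y‖ := by
  refine le_csSup ⟨‖y‖, ?_⟩ ⟨x, y, hx, rfl, rfl⟩
  rintro c ⟨x', y', hx', hy', rfl⟩
  linarith [norm_add_le x' y', norm_sub_le x' y']

variable [NormedSpace ℝ X]

theorem norm_midpoint_le_of_modulusConvexity {M : ℝ}
    (hconv : ∀ ε : ℝ, 0 < ε → ε ≤ 2 → M * ε ^ 2 ≤ modulusConvexity X ε)
    {u v : X} (hu : ‖u‖ = 1) (hv : ‖v‖ = 1) :
    ‖(2 : ℝ)⁻¹ • (u + v)‖ ≤ 1 - M * ‖u - v‖ ^ 2 := by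
  rw [norm_smul, norm_inv, Real.norm_two, ← div_eq_inv_mul]
  rcases eq_or_ne u v with rfl | huv
  · simp [← two_smul ℝ u, norm_smul, hu]
  · have hε := (hconv _ (norm_pos_iff.2 (sub_ne_zero.2 huv))
      ((norm_sub_le u v).trans_eq (by rw [hu, hv]; norm_num))).trans (modulusConvexity_le hu hv)
    linarith

theorem norm_add_norm_le_of_modulusSmoothness {K : ℝ}
    (hsmooth : ∀ τ : ℝ, 0 < τ → modulusSmoothness X τ ≤ K * τ ^ 2)
    {p q : X} (hpq : p + q ≠ 0) :
    ‖p‖ + ‖q‖ ≤ ‖p + q‖ + K * ‖p - q‖ ^ 2 / ‖p + q‖ := by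
  rcases eq_or_ne p q with rfl | hne
  · simp [← two_smul ℝ p, norm_smul, two_mul]
  have hz : 0 < ‖p + q‖ := norm_pos_iff.2 hpq
  set c := ‖p + q‖⁻¹
  -- Test `ρ_X` at `x = (p + q)/‖p + q‖`, `y = (p - q)/‖p + q‖`, where `x ± y = 2p/‖p+q‖, 2q/‖p+q‖`.
  have hx : ‖c • (p + q)‖ = 1 := by
    rw [norm_smul, norm_inv, norm_norm, inv_mul_cancel₀ hz.ne']
  have hy : ‖c • (p - q)‖ = c * ‖p - q‖ := by
    rw [norm_smul, norm_inv, norm_norm]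
  have hxy₁ : ‖c • (p + q) + c • (p - q)‖ = 2 * c * ‖p‖ := by
    rw [← smul_add, show p + q + (p - q) = (2 : ℝ) • p by rw [two_smul]; abel, smul_smul,
      norm_smul, Real.norm_of_nonneg (by positivity), mul_comm c]
  have hxy₂ : ‖c • (p + q) - c • (p - q)‖ = 2 * c * ‖q‖ := by
    rw [← smul_sub, show p + q - (p - q) = (2 : ℝ) • q by rw [two_smul]; abel, smul_smul,
      norm_smul, Real.norm_of_nonneg (by positivity), mul_comm c]
  have h := (le_modulusSmoothness hx).trans
    (hsmooth _ (hy ▸ mul_pos (inv_pos.2 hz) (norm_pos_iff.2 (sub_ne_zero.2 hne))))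
  rw [hxy₁, hxy₂, hy] at h
  have key : ‖p + q‖ * (K * (c * ‖p - q‖) ^ 2 - ((2 * c * ‖p‖ + 2 * c * ‖q‖) / 2 - 1)) =
      ‖p + q‖ + K * ‖p - q‖ ^ 2 / ‖p + q‖ - (‖p‖ + ‖q‖) := by
    simp only [c]; field_simp; ring
  linarith [key ▸ mul_nonneg hz.le (sub_nonneg.2 h)]

theorem qh_integrand_midpoint_add_le {M K : ℝ} (hM : 0 ≤ M) (hK : 0 ≤ K)
    (hconv : ∀ ε : ℝ, 0 < ε → ε ≤ 2 → M * ε ^ 2 ≤ modulusConvexity X ε)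
    (hsmooth : ∀ τ : ℝ, 0 < τ → modulusSmoothness X τ ≤ K * τ ^ 2)
    {p q u v : X} (hu : ‖u‖ = 1) (hv : ‖v‖ = 1) (hp : p ≠ 0) (hq : q ≠ 0)
    (hm₁ : 1 ≤ ‖(2 : ℝ)⁻¹ • (p + q)‖) (hm₂ : ‖(2 : ℝ)⁻¹ • (p + q)‖ ≤ 2) :
    ‖(2 : ℝ)⁻¹ • (u + v)‖ / ‖(2 : ℝ)⁻¹ • (p + q)‖ + M / 2 * ‖u - v‖ ^ 2 ≤
      (‖u‖ / ‖p‖ + ‖v‖ / ‖q‖) / 2 + K / 4 * ‖p - q‖ ^ 2 := by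
  set m := ‖(2 : ℝ)⁻¹ • (p + q)‖
  have hm : ‖p + q‖ = 2 * m := by
    simp only [m]
    rw [norm_smul, norm_inv, Real.norm_two, ← mul_assoc, mul_inv_cancel₀ two_ne_zero, one_mul]
  have hm₀ : 0 < m := one_pos.trans_le hm₁
  have ha : 0 < ‖p‖ := norm_pos_iff.2 hp
  have hb : 0 < ‖q‖ := norm_pos_iff.2 hq
  have htri : 2 * m ≤ ‖p‖ + ‖q‖ := hm ▸ norm_add_le p q
  have hsm : ‖p‖ + ‖q‖ - 2 * m ≤ K * ‖p - q‖ ^ 2 / 2 := by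
    have h := norm_add_norm_le_of_modulusSmoothness hsmooth (p := p) (q := q)
      (norm_pos_iff.1 (by linarith))
    rw [hm] at h
    have : K * ‖p - q‖ ^ 2 / (2 * m) ≤ K * ‖p - q‖ ^ 2 / 2 :=
      div_le_div_of_nonneg_left (by positivity) two_pos (by linarith)
    linarith
  have hconvex := norm_midpoint_le_of_modulusConvexity hconv hu hv
  rw [hu, hv, one_div, one_div]
  calc ‖(2 : ℝ)⁻¹ • (u + v)‖ / m + M / 2 * ‖u - v‖ ^ 2
      ≤ (1 - M * ‖u - v‖ ^ 2) / m + M / 2 * ‖u - v‖ ^ 2 := by gcongr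
    _ = 1 / m - M * ‖u - v‖ ^ 2 * (1 / m - 1 / 2) := by ring
    _ ≤ 1 / m := by
      have : 1 / 2 ≤ 1 / m := one_div_le_one_div_of_le hm₀ hm₂
      nlinarith [mul_nonneg hM (sq_nonneg ‖u - v‖)]
    _ = 2 / (‖p‖ + ‖q‖) + (‖p‖ + ‖q‖ - 2 * m) / (m * (‖p‖ + ‖q‖)) := by
      field_simp; ring
    _ ≤ 2 / (‖p‖ + ‖q‖) + K * ‖p - q‖ ^ 2 / 2 / 2 := by
      refine (add_le_add_iff_left _).2 (div_le_div₀ (by positivity) hsm two_pos ?_)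
      nlinarith
    _ ≤ (‖p‖⁻¹ + ‖q‖⁻¹) / 2 + K / 4 * ‖p - q‖ ^ 2 := by
      linarith [two_div_add_le_inv_add_inv ha hb]

end Moduli

section Paths

variable {X : Type*} [NormedAddCommGroup X] [NormedSpace ℝ X] {γ γ₁ γ₂ : ℝ → X}
  {L L₁ L₂ : NNReal} {a b : ℝ}

theorem qhLengthPunct_eq_setIntegral (hab : a ≤ b) :
    qhLengthPunct γ a b = ∫ t in Icc a b, ‖deriv γ t‖ / ‖γ t‖ := by
  rw [qhLengthPunct, intervalIntegral.integral_of_le hab, integral_Icc_eq_integral_Ioc]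

variable [CompleteSpace X]

theorem LipschitzOnWith.integrableOn_qh_integrand (hγ : LipschitzOnWith L γ (Icc a b)) {r : ℝ}
    (hr : 0 < r) (hγr : ∀ t ∈ Icc a b, r ≤ ‖γ t‖) :
    IntegrableOn (fun t => ‖deriv γ t‖ / ‖γ t‖) (Icc a b) := by
  refine .of_bound measure_Icc_lt_top ?_ (L / r) ?_
  · have hγm := hγ.continuousOn.aestronglyMeasurable (μ := volume) measurableSet_Icc
    exact ((stronglyMeasurable_deriv γ).aestronglyMeasurable.norm.aemeasurable.div
      hγm.norm.aemeasurable).aestronglyMeasurable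
  · filter_upwards [hγ.ae_norm_deriv_le, ae_restrict_mem measurableSet_Icc] with t hd ht
    rw [Real.norm_of_nonneg (by positivity)]
    exact div_le_div₀ L.coe_nonneg hd hr (hγr t ht)

theorem sub_div_le_qhLengthPunct (hab : a ≤ b) (hγ : LipschitzOnWith L γ (Icc a b))
    (hu : ∀ᵐ t ∂volume.restrict (Icc a b), ‖deriv γ t‖ = 1) {r C : ℝ} (hr : 0 < r)
    (hγC : ∀ t ∈ Icc a b, r ≤ ‖γ t‖ ∧ ‖γ t‖ ≤ C) :
    (b - a) / C ≤ qhLengthPunct γ a b := by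
  rw [qhLengthPunct_eq_setIntegral hab]
  have hconst : ∫ _ in Icc a b, C⁻¹ = (b - a) / C := by
    rw [setIntegral_const, Real.volume_real_Icc_of_le hab, smul_eq_mul, div_eq_mul_inv]
  rw [← hconst]
  refine setIntegral_mono_ae_restrict (integrableOn_const measure_Icc_lt_top.ne)
    (hγ.integrableOn_qh_integrand hr fun t ht => (hγC t ht).1) ?_
  filter_upwards [hu, ae_restrict_mem measurableSet_Icc] with t hut ht
  rw [hut, one_div]
  exact inv_anti₀ (hr.trans_le (hγC t ht).1) (hγC t ht).2

theorem integrableOn_sq_norm_deriv_sub (h₁ : LipschitzOnWith L₁ γ₁ (Icc a b))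
    (h₂ : LipschitzOnWith L₂ γ₂ (Icc a b)) :
    IntegrableOn (fun t => ‖deriv γ₁ t - deriv γ₂ t‖ ^ 2) (Icc a b) := by
  refine .of_bound measure_Icc_lt_top ?_ ((L₁ + L₂) ^ 2) ?_
  · exact (((stronglyMeasurable_deriv γ₁).sub
      (stronglyMeasurable_deriv γ₂)).norm.pow 2).aestronglyMeasurable
  · filter_upwards [h₁.ae_norm_deriv_le, h₂.ae_norm_deriv_le] with t ht₁ ht₂
    rw [Real.norm_of_nonneg (by positivity)]
    gcongr
    exact (norm_sub_le _ _).trans (add_le_add ht₁ ht₂)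

theorem norm_sub_le_integral_norm_deriv_sub (h₁ : LipschitzOnWith L₁ γ₁ (Icc a b))
    (h₂ : LipschitzOnWith L₂ γ₂ (Icc a b))
    (hd₁ : ∀ᵐ t ∂volume.restrict (Icc a b), DifferentiableAt ℝ γ₁ t)
    (hd₂ : ∀ᵐ t ∂volume.restrict (Icc a b), DifferentiableAt ℝ γ₂ t) (h₀ : γ₁ a = γ₂ a)
    {t : ℝ} (ht : t ∈ Icc a b) :
    ‖γ₁ t - γ₂ t‖ ≤ ∫ s in Icc a b, ‖deriv γ₁ s - deriv γ₂ s‖ := by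
  have hsub : Icc a t ⊆ Icc a b := Icc_subset_Icc_right ht.2
  have hderiv : ∀ᵐ s ∂volume.restrict (Icc a b),
      deriv (fun x => γ₁ x - γ₂ x) s = deriv γ₁ s - deriv γ₂ s := by
    filter_upwards [hd₁, hd₂] with s hs₁ hs₂
    exact deriv_sub hs₁ hs₂
  have hmv := ((h₁.sub h₂).mono hsub).norm_sub_le_integral_norm_deriv ht.1
    (ae_restrict_of_ae_restrict_of_subset hsub ((hd₁.and hd₂).mono fun s hs => hs.1.sub hs.2))
  simp only [h₀, sub_self, sub_zero] at hmv
  refine hmv.trans ((integral_congr_ae ?_).trans_le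
    (setIntegral_mono_set ?_ (.of_forall fun s => norm_nonneg _) hsub.eventuallyLE))
  · filter_upwards [ae_restrict_of_ae_restrict_of_subset hsub hderiv] with s hs
    rw [hs]
  · exact (h₁.integrableOn_deriv.sub h₂.integrableOn_deriv).norm

theorem integral_sq_norm_sub_le (hab : a ≤ b) (h₁ : LipschitzOnWith L₁ γ₁ (Icc a b))
    (h₂ : LipschitzOnWith L₂ γ₂ (Icc a b))
    (hd₁ : ∀ᵐ t ∂volume.restrict (Icc a b), DifferentiableAt ℝ γ₁ t)
    (hd₂ : ∀ᵐ t ∂volume.restrict (Icc a b), DifferentiableAt ℝ γ₂ t) (h₀ : γ₁ a = γ₂ a) :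
    ∫ t in Icc a b, ‖γ₁ t - γ₂ t‖ ^ 2 ≤
      (b - a) ^ 2 * ∫ t in Icc a b, ‖deriv γ₁ t - deriv γ₂ t‖ ^ 2 := by
  have h := integral_sq_le_of_abs_le_integral (f := fun t => ‖γ₁ t - γ₂ t‖)
    (h₁.integrableOn_deriv.sub h₂.integrableOn_deriv).norm (integrableOn_sq_norm_deriv_sub h₁ h₂) ?_
  · rwa [measureReal_restrict_apply_univ, Real.volume_real_Icc_of_le hab] at h
  filter_upwards [ae_restrict_mem measurableSet_Icc] with t ht
  rw [abs_norm]
  exact norm_sub_le_integral_norm_deriv_sub h₁ h₂ hd₁ hd₂ h₀ ht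

theorem eqOn_of_integral_sq_norm_deriv_sub_eq_zero
    (h₁ : LipschitzOnWith L₁ γ₁ (Icc a b)) (h₂ : LipschitzOnWith L₂ γ₂ (Icc a b))
    (hd₁ : ∀ᵐ t ∂volume.restrict (Icc a b), DifferentiableAt ℝ γ₁ t)
    (hd₂ : ∀ᵐ t ∂volume.restrict (Icc a b), DifferentiableAt ℝ γ₂ t) (h₀ : γ₁ a = γ₂ a)
    (hE : ∫ t in Icc a b, ‖deriv γ₁ t - deriv γ₂ t‖ ^ 2 = 0) :
    EqOn γ₁ γ₂ (Icc a b) := by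
  have hA := sq_integral_le_measureReal_mul_integral_sq
    (g := fun t => ‖deriv γ₁ t - deriv γ₂ t‖) (h₁.integrableOn_deriv.sub h₂.integrableOn_deriv).norm
    (integrableOn_sq_norm_deriv_sub h₁ h₂)
  rw [hE, mul_zero] at hA
  intro t ht
  have h := norm_sub_le_integral_norm_deriv_sub h₁ h₂ hd₁ hd₂ h₀ ht
  rw [pow_eq_zero_iff two_ne_zero |>.1 (le_antisymm hA (sq_nonneg _))] at h
  exact sub_eq_zero.1 (norm_le_zero_iff.1 h)

theorem qhLengthPunct_midpoint_add_le {M K : ℝ} (hM : 0 ≤ M) (hK : 0 ≤ K)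
    (hconv : ∀ ε : ℝ, 0 < ε → ε ≤ 2 → M * ε ^ 2 ≤ modulusConvexity X ε)
    (hsmooth : ∀ τ : ℝ, 0 < τ → modulusSmoothness X τ ≤ K * τ ^ 2) (hab : a ≤ b)
    (h₁ : LipschitzOnWith L₁ γ₁ (Icc a b)) (h₂ : LipschitzOnWith L₂ γ₂ (Icc a b))
    (hd₁ : ∀ᵐ t ∂volume.restrict (Icc a b), DifferentiableAt ℝ γ₁ t)
    (hd₂ : ∀ᵐ t ∂volume.restrict (Icc a b), DifferentiableAt ℝ γ₂ t) (h₀ : γ₁ a = γ₂ a)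
    (hu₁ : ∀ᵐ t ∂volume.restrict (Icc a b), ‖deriv γ₁ t‖ = 1)
    (hu₂ : ∀ᵐ t ∂volume.restrict (Icc a b), ‖deriv γ₂ t‖ = 1)
    (hγ₁ : ∀ t ∈ Icc a b, 1 ≤ ‖γ₁ t‖) (hγ₂ : ∀ t ∈ Icc a b, 1 ≤ ‖γ₂ t‖)
    (hmid : ∀ t ∈ Icc a b,
      1 ≤ ‖(2 : ℝ)⁻¹ • (γ₁ t + γ₂ t)‖ ∧ ‖(2 : ℝ)⁻¹ • (γ₁ t + γ₂ t)‖ ≤ 2) :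
    qhLengthPunct (fun s => (2 : ℝ)⁻¹ • (γ₁ s + γ₂ s)) a b +
        (M / 2 - K / 4 * (b - a) ^ 2) * ∫ t in Icc a b, ‖deriv γ₁ t - deriv γ₂ t‖ ^ 2 ≤
      (qhLengthPunct γ₁ a b + qhLengthPunct γ₂ a b) / 2 := by
  set mid := fun s => (2 : ℝ)⁻¹ • (γ₁ s + γ₂ s)
  have hmidLip : LipschitzOnWith (‖(2 : ℝ)⁻¹‖₊ * (L₁ + L₂)) mid (Icc a b) :=
    (lipschitzWith_smul _).comp_lipschitzOnWith (h₁.add h₂)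
  have hF₁ := h₁.integrableOn_qh_integrand one_pos hγ₁
  have hF₂ := h₂.integrableOn_qh_integrand one_pos hγ₂
  have hFm := hmidLip.integrableOn_qh_integrand one_pos fun t ht => (hmid t ht).1
  have hE := integrableOn_sq_norm_deriv_sub h₁ h₂
  have hD : IntegrableOn (fun t => ‖γ₁ t - γ₂ t‖ ^ 2) (Icc a b) :=
    ((h₁.continuousOn.sub h₂.continuousOn).norm.pow 2).integrableOn_Icc
  have hpointwise : ∀ᵐ t ∂volume.restrict (Icc a b),
      ‖deriv mid t‖ / ‖mid t‖ + M / 2 * ‖deriv γ₁ t - deriv γ₂ t‖ ^ 2 ≤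
        (‖deriv γ₁ t‖ / ‖γ₁ t‖ + ‖deriv γ₂ t‖ / ‖γ₂ t‖) / 2 + K / 4 * ‖γ₁ t - γ₂ t‖ ^ 2 := by
    filter_upwards [hd₁, hd₂, hu₁, hu₂, ae_restrict_mem measurableSet_Icc]
      with t ht₁ ht₂ hut₁ hut₂ ht
    have hderiv : deriv mid t = (2 : ℝ)⁻¹ • (deriv γ₁ t + deriv γ₂ t) :=
      ((ht₁.hasDerivAt.add ht₂.hasDerivAt).const_smul (2 : ℝ)⁻¹).deriv
    rw [hderiv]
    exact qh_integrand_midpoint_add_le hM hK hconv hsmooth hut₁ hut₂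
      (norm_pos_iff.1 (one_pos.trans_le (hγ₁ t ht)))
      (norm_pos_iff.1 (one_pos.trans_le (hγ₂ t ht))) (hmid t ht).1 (hmid t ht).2
  have hPoincare := integral_sq_norm_sub_le hab h₁ h₂ hd₁ hd₂ h₀
  have hG : IntegrableOn (fun t => (‖deriv γ₁ t‖ / ‖γ₁ t‖ + ‖deriv γ₂ t‖ / ‖γ₂ t‖) / 2)
      (Icc a b) := (hF₁.add hF₂).div_const 2
  have hmono : ∫ t in Icc a b, (‖deriv mid t‖ / ‖mid t‖ + M / 2 * ‖deriv γ₁ t - deriv γ₂ t‖ ^ 2) ≤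
      ∫ t in Icc a b, ((‖deriv γ₁ t‖ / ‖γ₁ t‖ + ‖deriv γ₂ t‖ / ‖γ₂ t‖) / 2 +
        K / 4 * ‖γ₁ t - γ₂ t‖ ^ 2) :=
    integral_mono_ae (hFm.add (hE.const_mul _)) (hG.add (hD.const_mul _)) hpointwise
  rw [integral_add hFm (hE.const_mul _), integral_add hG (hD.const_mul _),
    integral_div, integral_add hF₁ hF₂, integral_const_mul, integral_const_mul] at hmono
  rw [qhLengthPunct_eq_setIntegral hab, qhLengthPunct_eq_setIntegral hab,
    qhLengthPunct_eq_setIntegral hab]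
  nlinarith [mul_le_mul_of_nonneg_left hPoincare (by positivity : 0 ≤ K / 4)]

end Paths

/-- In a punctured Banach space, uniformly convex and uniformly smooth of power type 2:
for short unit-speed paths with equal quasihyperbolic lengths and a common starting point,
either the pointwise-average path has strictly smaller quasihyperbolic length, or the two
paths coincide. -/
theorem qh_strict_averaging_punctured
    {X : Type*} [NormedAddCommGroup X] [NormedSpace ℝ X] [CompleteSpace X]
    (M K : ℝ) (hM : 0 < M) (hK : 0 < K)
    (hconv : ∀ ε : ℝ, 0 < ε → ε ≤ 2 → M * ε ^ 2 ≤ modulusConvexity X ε)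
    (hsmooth : ∀ τ : ℝ, 0 < τ → modulusSmoothness X τ ≤ K * τ ^ 2) :
    ∃ R > 0, ∀ (t₁ : ℝ), 0 ≤ t₁ → ∀ γ₁ γ₂ : ℝ → X,
      -- rectifiable, a.e. differentiable paths (e.g. Lipschitz)
      (∃ L : NNReal, LipschitzOnWith L γ₁ (Set.Icc 0 t₁)) →
      (∃ L : NNReal, LipschitzOnWith L γ₂ (Set.Icc 0 t₁)) →
      (∀ᵐ t ∂(MeasureTheory.volume.restrict (Set.Icc 0 t₁)), DifferentiableAt ℝ γ₁ t) →
      (∀ᵐ t ∂(MeasureTheory.volume.restrict (Set.Icc 0 t₁)), DifferentiableAt ℝ γ₂ t) →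
      -- common starting point
      γ₁ 0 = γ₂ 0 →
      -- unit speed
      (∀ᵐ t ∂(MeasureTheory.volume.restrict (Set.Icc 0 t₁)), ‖deriv γ₁ t‖ = 1) →
      (∀ᵐ t ∂(MeasureTheory.volume.restrict (Set.Icc 0 t₁)), ‖deriv γ₂ t‖ = 1) →
      -- the paths and their pointwise average stay in the annulus 1 ≤ ‖z‖ ≤ 2
      (∀ t ∈ Set.Icc 0 t₁, 1 ≤ ‖γ₁ t‖ ∧ ‖γ₁ t‖ ≤ 2) →
      (∀ t ∈ Set.Icc 0 t₁, 1 ≤ ‖γ₂ t‖ ∧ ‖γ₂ t‖ ≤ 2) →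
      (∀ t ∈ Set.Icc 0 t₁, 1 ≤ ‖(2 : ℝ)⁻¹ • (γ₁ t + γ₂ t)‖ ∧
        ‖(2 : ℝ)⁻¹ • (γ₁ t + γ₂ t)‖ ≤ 2) →
      -- equal quasihyperbolic lengths bounded by R
      qhLengthPunct γ₁ 0 t₁ = qhLengthPunct γ₂ 0 t₁ →
      qhLengthPunct γ₁ 0 t₁ ≤ R →
      -- conclusion: strict inequality for the average path, or the paths coincide
      ((qhLengthPunct γ₁ 0 t₁ + qhLengthPunct γ₂ 0 t₁) / 2 >
          qhLengthPunct (fun s => (2 : ℝ)⁻¹ • (γ₁ s + γ₂ s)) 0 t₁) ∨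
        (∀ t ∈ Set.Icc 0 t₁, γ₁ t = γ₂ t) := by
  refine ⟨√(M / (4 * K)), by positivity, ?_⟩
  rintro t₁ ht₁ γ₁ γ₂ ⟨L₁, h₁⟩ ⟨L₂, h₂⟩ hd₁ hd₂ h₀ hu₁ hu₂ hγ₁ hγ₂ hmid - hR
  have hlength : t₁ / 2 ≤ qhLengthPunct γ₁ 0 t₁ := by
    simpa using sub_div_le_qhLengthPunct ht₁ h₁ hu₁ one_pos hγ₁
  have hshort : K * t₁ ^ 2 ≤ M := by
    have hR2 : K * (2 * √(M / (4 * K))) ^ 2 = M := by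
      rw [mul_pow, Real.sq_sqrt (by positivity)]; field_simp; ring
    exact hR2 ▸ mul_le_mul_of_nonneg_left (pow_le_pow_left₀ ht₁ (by linarith) 2) hK.le
  have havg := qhLengthPunct_midpoint_add_le hM.le hK.le hconv hsmooth ht₁ h₁ h₂ hd₁ hd₂ h₀
    hu₁ hu₂ (fun t ht => (hγ₁ t ht).1) (fun t ht => (hγ₂ t ht).1) hmid
  rw [sub_zero] at havg
  by_cases hE : ∫ t in Icc 0 t₁, ‖deriv γ₁ t - deriv γ₂ t‖ ^ 2 = 0
  · exact Or.inr (eqOn_of_integral_sq_norm_deriv_sub_eq_zero h₁ h₂ hd₁ hd₂ h₀ hE)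
  · have hEpos := (integral_nonneg fun t => sq_nonneg ‖deriv γ₁ t - deriv γ₂ t‖).lt_of_ne' hE
    left
    nlinarith [mul_pos hM hEpos]
end

section
/- Let X = ℝ² equipped with the supremum norm ‖(a,b)‖ = max(|a|, |b|), and let Ω = {(z₁, z₂) ∈ ℝ² : z₂ < 0} be the lower half-plane, so that d((z₁,z₂)) = −z₂. Then for every t ∈ [−1, 1], the quasihyperbolic distance from x = (0, −1) to (t, −2) equals log 2: k_Ω((0,−1), (t,−2)) = log 2. In particular the segment from (−1,−2) to (1,−2) is contained in the quasihyperbolic sphere of radius log 2 centered at (0,−1). -/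
open Set Metric

theorem integral_deriv_div_eq_log_sub_log {f f' : ℝ → ℝ} {a b : ℝ}
    (hf : ∀ s ∈ uIcc a b, HasDerivAt f (f' s) s) (hpos : ∀ s ∈ uIcc a b, 0 < f s)
    (hint : IntervalIntegrable (fun s => f' s / f s) MeasureTheory.volume a b) :
    ∫ s in a..b, f' s / f s = Real.log (f b) - Real.log (f a) :=
  intervalIntegral.integral_eq_sub_of_hasDerivAt
    (fun s hs => (hf s hs).log (hpos s hs).ne') hint

section HalfSpace

variable {ι : Type*} (i : ι) {γ : ℝ → ι → ℝ} {a b : ℝ}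

theorem intervalIntegrable_div_neg_apply {g : ℝ → ℝ} (hg : Continuous g) (hγ : Continuous γ)
    (hmaps : MapsTo γ (uIcc a b) {w : ι → ℝ | w i < 0}) :
    IntervalIntegrable (fun s => g s / -γ s i) MeasureTheory.volume a b :=
  (hg.continuousOn.div ((continuous_apply i).comp hγ).neg.continuousOn
    fun _ hs => (neg_pos.2 (hmaps hs)).ne').intervalIntegrable

theorem mapsTo_affine_halfSpace {x v : ι → ℝ} (hx : x i < 0) (hv : v i ≤ 0) :
    MapsTo (fun s : ℝ => x + s • v) (Ici 0) {w : ι → ℝ | w i < 0} := fun s hs => by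
  show x i + s * v i < 0
  nlinarith [mem_Ici.1 hs]

variable [Fintype ι]

theorem infDist_compl_halfSpace {z : ι → ℝ} (hz : z i < 0) :
    infDist z {w : ι → ℝ | w i < 0}ᶜ = -z i := by
  classical
  apply le_antisymm
  · have hproj : Function.update z i 0 ∈ {w : ι → ℝ | w i < 0}ᶜ := by simp
    refine (infDist_le_dist_of_mem hproj).trans ((dist_pi_le_iff (by linarith)).2 fun j => ?_)
    rcases eq_or_ne j i with rfl | hj
    · rw [Function.update_self, Real.dist_eq, sub_zero, abs_of_neg hz]
    · rw [Function.update_of_ne hj, dist_self]; linarith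
  · refine (le_infDist ⟨0, by simp⟩).2 fun w hw => ?_
    have hw0 : 0 ≤ w i := not_lt.1 hw
    calc -z i ≤ |z i - w i| := by rw [abs_sub_comm]; exact le_abs.2 (Or.inl (by linarith))
      _ ≤ dist z w := dist_le_pi_dist z w i

theorem qhLength_halfSpace_eq_integral (hab : a ≤ b)
    (hmaps : MapsTo γ (Icc a b) {w : ι → ℝ | w i < 0}) :
    qhLength {w : ι → ℝ | w i < 0} γ a b = ∫ s in a..b, ‖deriv γ s‖ / -γ s i := by
  refine intervalIntegral.integral_congr fun s hs => ?_
  rw [uIcc_of_le hab] at hs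
  simp only [infDist_compl_halfSpace i (hmaps hs)]

theorem integral_neg_deriv_div_neg_eq_log_sub_log (hγ : ContDiff ℝ 1 γ)
    (hmaps : MapsTo γ (uIcc a b) {w : ι → ℝ | w i < 0}) :
    ∫ s in a..b, -deriv γ s i / -γ s i = Real.log (-γ b i) - Real.log (-γ a i) := by
  have hderiv s : HasDerivAt (fun s => -γ s i) (-deriv γ s i) s :=
    (hasDerivAt_pi.1 ((hγ.differentiable one_ne_zero) s).hasDerivAt i).neg
  exact integral_deriv_div_eq_log_sub_log (fun s _ => hderiv s)
    (fun s hs => neg_pos.2 (hmaps hs)) <| intervalIntegrable_div_neg_apply i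
      ((continuous_apply i).comp (hγ.continuous_deriv le_rfl)).neg hγ.continuous hmaps

theorem log_sub_log_le_qhLength (hab : a ≤ b) (hγ : ContDiff ℝ 1 γ)
    (hmaps : MapsTo γ (Icc a b) {w : ι → ℝ | w i < 0}) :
    Real.log (-γ b i) - Real.log (-γ a i) ≤ qhLength {w : ι → ℝ | w i < 0} γ a b := by
  have hmaps' : MapsTo γ (uIcc a b) {w : ι → ℝ | w i < 0} := by rwa [uIcc_of_le hab]
  rw [qhLength_halfSpace_eq_integral i hab hmaps,
    ← integral_neg_deriv_div_neg_eq_log_sub_log i hγ hmaps']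
  refine intervalIntegral.integral_mono_on hab
    (intervalIntegrable_div_neg_apply i
      ((continuous_apply i).comp (hγ.continuous_deriv le_rfl)).neg hγ.continuous hmaps')
    (intervalIntegrable_div_neg_apply i (hγ.continuous_deriv le_rfl).norm hγ.continuous hmaps')
    fun s hs => div_le_div_of_nonneg_right ?_ (neg_pos.2 (hmaps hs)).le
  exact (neg_le_abs _).trans (norm_le_pi_norm (deriv γ s) i)

theorem qhLength_affine_halfSpace {x v : ι → ℝ} (hx : x i < 0) (hv : ‖v‖ = -v i) :
    qhLength {w : ι → ℝ | w i < 0} (fun s => x + s • v) 0 1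
      = Real.log (-(x i + v i)) - Real.log (-x i) := by
  have hmaps := mapsTo_affine_halfSpace i hx (by linarith [norm_nonneg v])
  have hγ : ContDiff ℝ 1 fun s : ℝ => x + s • v :=
    contDiff_const.add (contDiff_id.smul contDiff_const)
  have hderiv s : deriv (fun s : ℝ => x + s • v) s = v := by
    simpa using (((hasDerivAt_id s).smul_const v).const_add x).deriv
  rw [qhLength_halfSpace_eq_integral i zero_le_one (hmaps.mono_left Icc_subset_Ici_self)]
  have key := integral_neg_deriv_div_neg_eq_log_sub_log i hγ
    (hmaps.mono_left ((uIcc_of_le zero_le_one).trans_subset Icc_subset_Ici_self))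
  rw [zero_smul, one_smul, add_zero] at key
  simpa only [hderiv, hv, Pi.add_apply] using key

end HalfSpace

/-- In `ℝ²` with the supremum norm (here `Fin 2 → ℝ` with the sup norm) and the lower
half-plane `Ω = {z : z₂ < 0}`, the quasihyperbolic distance from `(0,−1)` to `(t,−2)`
equals `log 2` for every `t ∈ [−1,1]`: the segment from `(−1,−2)` to `(1,−2)` lies on
the quasihyperbolic sphere of radius `log 2` centered at `(0,−1)`. -/
theorem qhDist_halfPlane_sup_segment_on_sphere
    (t : ℝ) (ht : t ∈ Set.Icc (-1 : ℝ) 1) :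
    qhDist {z : Fin 2 → ℝ | z 1 < 0} ![0, -1] ![t, -2] = Real.log 2 := by
  have hv : ‖(![t, -1] : Fin 2 → ℝ)‖ = -(![t, -1] : Fin 2 → ℝ) 1 := by
    rw [show -(![t, -1] : Fin 2 → ℝ) 1 = 1 by simp]
    refine le_antisymm ((pi_norm_le_iff_of_nonneg zero_le_one).2 ?_) ?_
    · simpa [Fin.forall_fin_two, abs_le] using ht
    · simpa using norm_le_pi_norm (![t, -1] : Fin 2 → ℝ) 1
  have hx : (![0, -1] : Fin 2 → ℝ) 1 < 0 := by simp
  have hend : ![0, -1] + (1 : ℝ) • ![t, -1] = ![t, -2] := by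
    ext j; fin_cases j <;> norm_num
  refine IsLeast.csInf_eq
    ⟨⟨fun s => ![0, -1] + s • ![t, -1], ⟨?_, ?_, by simp, hend⟩, ?_⟩, ?_⟩
  · exact contDiff_const.add (contDiff_id.smul contDiff_const)
  · exact (mapsTo_affine_halfSpace 1 hx (by simp)).mono_left Icc_subset_Ici_self
  · refine (qhLength_affine_halfSpace 1 hx hv).trans ?_
    norm_num
  · rintro _ ⟨γ, ⟨hγ, hmaps, h0, h1⟩, rfl⟩
    simpa [h0, h1] using log_sub_log_le_qhLength 1 zero_le_one hγ hmaps
end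

section
/- Let X = ℝ² equipped with the supremum norm ‖(a,b)‖ = max(|a|, |b|), and let Ω = {(z₁, z₂) ∈ ℝ² : z₂ < 0}. Let γ : [0,1] → Ω be any rectifiable, almost everywhere differentiable path (e.g. Lipschitz) with γ(0) = (−1,−2), γ(1) = (1,−2), and whose second coordinate satisfies −2 ≤ γ₂(t) < 0 for all t ∈ [0,1]. Then its quasihyperbolic length satisfies ℓ_k(γ) = ∫₀¹ max(|γ₁′(t)|, |γ₂′(t)|) / (−γ₂(t)) dt ≥ 1. -/
/-!
Along the path the first coordinate rises from `-1` to `1`, while the distance `-γ₂` to the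
boundary never exceeds `2`. Since `|γ₁'| ≤ ‖γ'‖` in the sup norm, the quasihyperbolic integrand
dominates `γ₁'/2` almost everywhere, and the fundamental theorem of calculus for the Lipschitz
(hence absolutely continuous) function `γ₁` gives `ℓ_k(γ) ≥ (1 - (-1)) / 2 = 1`. Because `deriv`
is `0` off the differentiability set, comparing `γ₁'` with `(deriv γ) 0` needs Rademacher's theorem
for the path itself, not just for its coordinates.
-/

open MeasureTheory Set

theorem LipschitzOnWith.ae_differentiableAt_of_mem_uIcc {V : Type*} [NormedAddCommGroup V]
    [NormedSpace ℝ V] [FiniteDimensional ℝ V] {f : ℝ → V} {K : NNReal} {a b : ℝ}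
    (hf : LipschitzOnWith K f (uIcc a b)) : ∀ᵐ t, t ∈ uIcc a b → DifferentiableAt ℝ f t := by
  refine BoundedVariationOn.ae_differentiableAt_of_mem_uIcc ?_
  simpa [uIcc, inter_self] using
    hf.locallyBoundedVariationOn (min a b) (max a b) (by simp [uIcc]) (by simp [uIcc])

theorem LipschitzOnWith.ae_deriv_apply {ι : Type*} [Fintype ι] {γ : ℝ → ι → ℝ} {K : NNReal}
    {a b : ℝ} (hγ : LipschitzOnWith K γ (uIcc a b)) (i : ι) :
    ∀ᵐ t, t ∈ uIcc a b → deriv (fun s => γ s i) t = deriv γ t i := by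
  filter_upwards [hγ.ae_differentiableAt_of_mem_uIcc] with t hdiff ht
  exact (hasDerivAt_pi.1 (hdiff ht).hasDerivAt i).deriv

theorem LipschitzOnWith.intervalIntegrable_deriv {F : Type*} [NormedAddCommGroup F]
    [NormedSpace ℝ F] [CompleteSpace F] {f : ℝ → F} {K : NNReal} {a b : ℝ}
    (hf : LipschitzOnWith K f (uIcc a b)) : IntervalIntegrable (deriv f) volume a b := by
  refine (intervalIntegrable_const (c := (K : ℝ))).mono_fun'
    (aestronglyMeasurable_deriv f _) ?_
  rw [Filter.EventuallyLE, uIoc, ← Measure.restrict_congr_set Ioo_ae_eq_Ioc,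
    ae_restrict_iff' measurableSet_Ioo]
  exact Filter.Eventually.of_forall fun t ht =>
    norm_deriv_le_of_lipschitzOn (Icc_mem_nhds ht.1 ht.2) hf

theorem AbsolutelyContinuousOnInterval.sub_le_integral_of_deriv_le {f φ : ℝ → ℝ} {a b : ℝ}
    (hf : AbsolutelyContinuousOnInterval f a b) (hab : a ≤ b)
    (hφ : IntervalIntegrable φ volume a b)
    (h : ∀ᵐ t ∂volume.restrict (Icc a b), deriv f t ≤ φ t) :
    f b - f a ≤ ∫ t in a..b, φ t := by
  rw [← hf.integral_deriv_eq_sub]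
  exact intervalIntegral.integral_mono_ae_restrict hab hf.intervalIntegrable_deriv hφ h

theorem norm_fin_two_eq_max (x : Fin 2 → ℝ) : ‖x‖ = max |x 0| |x 1| :=
  le_antisymm ((pi_norm_le_iff_of_nonneg (by positivity)).2 <| Fin.forall_fin_two.2
      ⟨le_max_left _ _, le_max_right _ _⟩)
    (max_le (norm_le_pi_norm x 0) (norm_le_pi_norm x 1))

theorem qhLength_lower_bound_halfPlane_sup_general
    (γ : ℝ → (Fin 2 → ℝ)) (L : NNReal) (hlip : LipschitzOnWith L γ (Set.Icc 0 1))
    (h0 : γ 0 = ![-1, -2]) (h1 : γ 1 = ![1, -2])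
    (hsecond : ∀ t ∈ Set.Icc (0 : ℝ) 1, -2 ≤ γ t 1 ∧ γ t 1 < 0) :
    1 ≤ ∫ t in (0 : ℝ)..1, max |deriv γ t 0| |deriv γ t 1| / (-(γ t 1)) := by
  simp_rw [← norm_fin_two_eq_max]
  rw [← uIcc_of_le zero_le_one] at hlip hsecond
  have hlip₀ : LipschitzOnWith L (fun t => γ t 0) (uIcc 0 1) := by
    simpa [Function.comp_def] using (LipschitzWith.eval (0 : Fin 2)).comp_lipschitzOnWith hlip
  have hint : IntervalIntegrable (fun t => ‖deriv γ t‖ / -(γ t 1)) volume 0 1 := by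
    have hd : ContinuousOn (fun t => (-(γ t 1))⁻¹) (uIcc 0 1) :=
      ((continuous_apply 1).comp_continuousOn hlip.continuousOn).neg.inv₀
        fun t ht => (neg_pos.2 (hsecond t ht).2).ne'
    simpa only [div_eq_mul_inv] using hlip.intervalIntegrable_deriv.norm.mul_continuousOn hd
  have hpt : ∀ᵐ t ∂volume.restrict (Icc 0 1),
      deriv (fun s => γ s 0) t ≤ 2 * (‖deriv γ t‖ / -(γ t 1)) := by
    rw [ae_restrict_iff' measurableSet_Icc, ← uIcc_of_le zero_le_one]
    filter_upwards [hlip.ae_deriv_apply 0] with t hderiv ht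
    obtain ⟨hlow, hneg⟩ := hsecond t ht
    rw [hderiv ht]
    calc deriv γ t 0 ≤ ‖deriv γ t‖ := (le_abs_self _).trans (norm_le_pi_norm (deriv γ t) 0)
      _ ≤ 2 * (‖deriv γ t‖ / -(γ t 1)) := by
        rw [mul_div_assoc', le_div_iff₀ (by linarith)]
        nlinarith [norm_nonneg (deriv γ t)]
  have hftc := hlip₀.absolutelyContinuousOnInterval.sub_le_integral_of_deriv_le zero_le_one
    (hint.const_mul 2) hpt
  rw [intervalIntegral.integral_const_mul, h0, h1] at hftc
  norm_num at hftc
  linarith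

/-- In `ℝ²` with the supremum norm (here `Fin 2 → ℝ` with the sup norm) and the lower
half-plane `Ω = {z : z₂ < 0}` (for which `d(z) = −z₂`): any rectifiable, almost everywhere
differentiable (e.g. Lipschitz) path from `(−1,−2)` to `(1,−2)` whose second coordinate
stays in `[−2, 0)` has quasihyperbolic length at least `1`. -/
theorem qhLength_lower_bound_halfPlane_sup
    (γ : ℝ → (Fin 2 → ℝ)) (L : NNReal) (hlip : LipschitzOnWith L γ (Set.Icc 0 1))
    (hdiff : ∀ᵐ t ∂(MeasureTheory.volume.restrict (Set.Icc (0 : ℝ) 1)),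
      DifferentiableAt ℝ γ t)
    (h0 : γ 0 = ![-1, -2]) (h1 : γ 1 = ![1, -2])
    (hsecond : ∀ t ∈ Set.Icc (0 : ℝ) 1, -2 ≤ γ t 1 ∧ γ t 1 < 0) :
    1 ≤ ∫ t in (0 : ℝ)..1, max |deriv γ t 0| |deriv γ t 1| / (-(γ t 1)) :=
  qhLength_lower_bound_halfPlane_sup_general γ L hlip h0 h1 hsecond
end
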